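/- arXiv:2306.00413 — 7 statements merged into one kernel-verified Lean document; each statement's English description precedes it below -/
import Mathlib

section
/- Given sijections φ : S ⇒ T and ψ : T ⇒ U, the map ψ∘φ defined by sending s ∈ S⊔U to the last well-defined element of the sequence s, φ(s), ψ(φ(s)), φ(ψ(φ(s))), … is a well-defined sijection from S to U. -/
/-- A signed set: a pair of (disjoint) finite sets. -/
abbrev SignedSet (α : Type) := Finset α × Finset α

variable {α : Type}

/-- Membership in the plus part `S⁺ ⊔ T⁻` of the tagged disjoint union of the supports:
tag `false` means the element lives in `S`, tag `true` means it lives in `T`. -/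
def memP (S T : SignedSet α) (p : α × Bool) : Prop :=
  (p.2 = false ∧ p.1 ∈ S.1) ∨ (p.2 = true ∧ p.1 ∈ T.2)

/-- Membership in the minus part `S⁻ ⊔ T⁺`. -/
def memM (S T : SignedSet α) (p : α × Bool) : Prop :=
  (p.2 = false ∧ p.1 ∈ S.2) ∨ (p.2 = true ∧ p.1 ∈ T.1)

/-- The support of the pair `(S, T)`, as a tagged union. -/
def valid (S T : SignedSet α) (p : α × Bool) : Prop := memP S T p ∨ memM S T p

/-- `f` encodes a sijection from `S` to `T`: an involution on the tagged disjoint union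
of the supports which restricts to a bijection between `S⁺ ⊔ T⁻` and `S⁻ ⊔ T⁺`
(and which is the identity off the support). -/
structure IsSij (S T : SignedSet α) (f : α × Bool → α × Bool) : Prop where
  invol : ∀ p, f (f p) = p
  mapsP : ∀ p, memP S T p → memM S T (f p)
  mapsM : ∀ p, memM S T p → memP S T (f p)
  fix : ∀ p, ¬ valid S T p → f p = p

/-- One step of the alternating sequence `s, φ(s), ψ(φ(s)), φ(ψ(φ(s))), …` used to
compose sijections `φ : S ⇒ T` and `ψ : T ⇒ U`. A state records the current element,
its location (`0` = in `S`, `1` = in `T`, `2` = in `U`) and which map is to be applied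
next (`true` = `φ`, `false` = `ψ`); the step is `none` exactly when the next map is not
defined at the current element, i.e. when the current element is the last well-defined
one of the sequence. -/
def step (f g : α × Bool → α × Bool) : α × Fin 3 × Bool → Option (α × Fin 3 × Bool) :=
  fun q =>
    match q with
    | (x, loc, nf) =>
      if nf then
        if loc = 0 then
          some ((f (x, false)).1, if (f (x, false)).2 then 1 else 0, false)
        else if loc = 1 then
          some ((f (x, true)).1, if (f (x, true)).2 then 1 else 0, false)
        else none
      else
        if loc = 1 then
          some ((g (x, false)).1, if (g (x, false)).2 then 2 else 1, true)
        else if loc = 2 then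
          some ((g (x, true)).1, if (g (x, true)).2 then 2 else 1, true)
        else none

/-- The alternating sequence, as a partially defined sequence of states. -/
def seq (f g : α × Bool → α × Bool) (st : α × Fin 3 × Bool) : ℕ → Option (α × Fin 3 × Bool)
  | 0 => some st
  | n + 1 => (seq f g st n).bind (step f g)

/-- The starting state: an element of `S` (tag `false`) starts by applying `φ`,
an element of `U` (tag `true`) starts by applying `ψ`. -/
def start (p : α × Bool) : α × Fin 3 × Bool := (p.1, if p.2 then 2 else 0, !p.2)

/-- `y` (tagged: `false` = in `S`, `true` = in `U`) is the last well-defined element of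
the alternating sequence started at `p`. -/
def IsLast (f g : α × Bool → α × Bool) (p : α × Bool) (y : α × Bool) : Prop :=
  ∃ n st, seq f g (start p) n = some st ∧ step f g st = none ∧
    st.1 = y.1 ∧ st.2.1 = (if y.2 then 2 else 0)

open Classical in
/-- The composition `ψ ∘ φ` of (the encodings of) two sijections: each element is sent
to the last well-defined element of the alternating sequence
`s, φ(s), ψ(φ(s)), φ(ψ(φ(s))), …`. -/
noncomputable def scomp (f g : α × Bool → α × Bool) : α × Bool → α × Bool :=
  fun p => if h : ∃ y, IsLast f g p y then h.choose else p

section Helpers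

variable {f g : α × Bool → α × Bool}

def flip3 (st : α × Fin 3 × Bool) : α × Fin 3 × Bool := (st.1, st.2.1, !st.2.2)

lemma step_eq_none_iff (st : α × Fin 3 × Bool) :
    step f g st = none ↔ (st.2.2 = true ∧ st.2.1 = 2) ∨ (st.2.2 = false ∧ st.2.1 = 0) := by
  obtain ⟨x, loc, nf⟩ := st
  cases nf <;> fin_cases loc <;> simp [step]

lemma step_flip3 (hf : ∀ p, f (f p) = p) (hg : ∀ p, g (g p) = p)
    {st st' : α × Fin 3 × Bool} (h : step f g st = some st') :
    step f g (flip3 st') = some (flip3 st) := by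
  obtain ⟨x, loc, nf⟩ := st
  cases nf <;> fin_cases loc <;> simp [step] at h <;> subst h
  · -- nf = false, loc = 1 : g applied to (x, false)
    cases hb : (g (x, false)).2 <;>
      · have hpair : ((g (x, false)).1, (g (x,false)).2) = g (x, false) := rfl
        rw [hb] at hpair
        simp [flip3, step, hb, hpair, hg]
  · cases hb : (g (x, true)).2 <;>
      · have hpair : ((g (x, true)).1, (g (x,true)).2) = g (x, true) := rfl
        rw [hb] at hpair
        simp [flip3, step, hb, hpair, hg]
  · cases hb : (f (x, false)).2 <;>
      · have hpair : ((f (x, false)).1, (f (x,false)).2) = f (x, false) := rfl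
        rw [hb] at hpair
        simp [flip3, step, hb, hpair, hf]
  · cases hb : (f (x, true)).2 <;>
      · have hpair : ((f (x, true)).1, (f (x,true)).2) = f (x, true) := rfl
        rw [hb] at hpair
        simp [flip3, step, hb, hpair, hf]

end Helpers
section Helpers2

variable {f g : α × Bool → α × Bool}

lemma seq_succ (s : α × Fin 3 × Bool) (n : ℕ) :
    seq f g s (n + 1) = (seq f g s n).bind (step f g) := rfl

lemma seq_succ_some {s a : α × Fin 3 × Bool} {n : ℕ} (h : seq f g s (n + 1) = some a) :
    ∃ b, seq f g s n = some b ∧ step f g b = some a := by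
  rw [seq_succ] at h
  cases hs : seq f g s n with
  | none => rw [hs] at h; simp at h
  | some b => rw [hs] at h; exact ⟨b, rfl, h⟩

lemma ite_ne (c : Prop) [Decidable c] {β : Type} (a b d : β) (h1 : a ≠ d) (h2 : b ≠ d) :
    (if c then a else b) ≠ d := by split <;> assumption

lemma step_ne_start {st : α × Fin 3 × Bool} {p : α × Bool} :
    step f g st ≠ some (start p) := by
  obtain ⟨x, loc, nf⟩ := st
  intro h
  cases nf <;> fin_cases loc <;> cases hp : p.2 <;>
    simp [step, start, hp] at h <;>
    obtain ⟨-, h2⟩ := h <;>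
    exact absurd h2 (ite_ne _ _ _ _ (by decide) (by decide))

lemma step_inj (hf : ∀ p, f (f p) = p) (hg : ∀ p, g (g p) = p)
    {a b c : α × Fin 3 × Bool} (ha : step f g a = some c) (hb : step f g b = some c) :
    a = b := by
  have h1 := step_flip3 hf hg ha
  have h2 := step_flip3 hf hg hb
  rw [h1] at h2
  obtain ⟨x, l, n⟩ := a; obtain ⟨y, m, k⟩ := b
  simp [flip3] at h2
  obtain ⟨rfl, rfl, h⟩ := h2
  simp [h]

lemma seq_start_inj (hf : ∀ p, f (f p) = p) (hg : ∀ p, g (g p) = p)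
    {p : α × Bool} :
    ∀ {n m : ℕ} {a : α × Fin 3 × Bool},
      seq f g (start p) n = some a → seq f g (start p) m = some a → n = m := by
  intro n
  induction n with
  | zero =>
    intro m a h1 h2
    cases m with
    | zero => rfl
    | succ k =>
      obtain ⟨b, _, hb⟩ := seq_succ_some h2
      simp [seq] at h1; subst h1
      exact absurd hb step_ne_start
  | succ n ih =>
    intro m a h1 h2
    cases m with
    | zero =>
      obtain ⟨b, _, hb⟩ := seq_succ_some h1
      simp [seq] at h2; subst h2
      exact absurd hb step_ne_start
    | succ k =>
      obtain ⟨b, hb1, hb2⟩ := seq_succ_some h1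
      obtain ⟨c, hc1, hc2⟩ := seq_succ_some h2
      have : b = c := step_inj hf hg hb2 hc2
      subst this
      exact congrArg Nat.succ (ih hb1 hc1)

end Helpers2
section Helpers3

variable {S T U : SignedSet α} {f g : α × Bool → α × Bool}

def PV (S T U : SignedSet α) (st : α × Fin 3 × Bool) : Prop :=
  (st.2.1 = 0 ∧ st.2.2 = true ∧ st.1 ∈ S.1) ∨
  (st.2.1 = 0 ∧ st.2.2 = false ∧ st.1 ∈ S.2) ∨
  (st.2.1 = 1 ∧ st.2.2 = true ∧ st.1 ∈ T.2) ∨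
  (st.2.1 = 1 ∧ st.2.2 = false ∧ st.1 ∈ T.1) ∨
  (st.2.1 = 2 ∧ st.2.2 = true ∧ st.1 ∈ U.1) ∨
  (st.2.1 = 2 ∧ st.2.2 = false ∧ st.1 ∈ U.2)

def MV (S T U : SignedSet α) (st : α × Fin 3 × Bool) : Prop :=
  (st.2.1 = 0 ∧ st.2.2 = true ∧ st.1 ∈ S.2) ∨
  (st.2.1 = 0 ∧ st.2.2 = false ∧ st.1 ∈ S.1) ∨
  (st.2.1 = 1 ∧ st.2.2 = true ∧ st.1 ∈ T.1) ∨
  (st.2.1 = 1 ∧ st.2.2 = false ∧ st.1 ∈ T.2) ∨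
  (st.2.1 = 2 ∧ st.2.2 = true ∧ st.1 ∈ U.2) ∨
  (st.2.1 = 2 ∧ st.2.2 = false ∧ st.1 ∈ U.1)

lemma pv_step (hf : IsSij S T f) (hg : IsSij T U g) {st st' : α × Fin 3 × Bool}
    (hp : PV S T U st) (h : step f g st = some st') : PV S T U st' := by
  obtain ⟨x, loc, nf⟩ := st
  simp only [PV] at hp
  rcases hp with ⟨h1,h2,hx⟩|⟨h1,h2,hx⟩|⟨h1,h2,hx⟩|⟨h1,h2,hx⟩|⟨h1,h2,hx⟩|⟨h1,h2,hx⟩ <;>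
      subst h1 <;> subst h2 <;> simp [step] at h <;> subst h
  · rcases hf.mapsP (x, false) (Or.inl ⟨rfl, hx⟩) with ⟨h3, h4⟩ | ⟨h3, h4⟩ <;>
      simp [PV, h3, h4]
  · rcases hf.mapsP (x, true) (Or.inr ⟨rfl, hx⟩) with ⟨h3, h4⟩ | ⟨h3, h4⟩ <;>
      simp [PV, h3, h4]
  · rcases hg.mapsP (x, false) (Or.inl ⟨rfl, hx⟩) with ⟨h3, h4⟩ | ⟨h3, h4⟩ <;>
      simp [PV, h3, h4]
  · rcases hg.mapsP (x, true) (Or.inr ⟨rfl, hx⟩) with ⟨h3, h4⟩ | ⟨h3, h4⟩ <;>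
      simp [PV, h3, h4]

lemma mv_step (hf : IsSij S T f) (hg : IsSij T U g) {st st' : α × Fin 3 × Bool}
    (hp : MV S T U st) (h : step f g st = some st') : MV S T U st' := by
  obtain ⟨x, loc, nf⟩ := st
  simp only [MV] at hp
  rcases hp with ⟨h1,h2,hx⟩|⟨h1,h2,hx⟩|⟨h1,h2,hx⟩|⟨h1,h2,hx⟩|⟨h1,h2,hx⟩|⟨h1,h2,hx⟩ <;>
      subst h1 <;> subst h2 <;> simp [step] at h <;> subst h
  · rcases hf.mapsM (x, false) (Or.inl ⟨rfl, hx⟩) with ⟨h3, h4⟩ | ⟨h3, h4⟩ <;>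
      simp [MV, h3, h4]
  · rcases hf.mapsM (x, true) (Or.inr ⟨rfl, hx⟩) with ⟨h3, h4⟩ | ⟨h3, h4⟩ <;>
      simp [MV, h3, h4]
  · rcases hg.mapsM (x, false) (Or.inl ⟨rfl, hx⟩) with ⟨h3, h4⟩ | ⟨h3, h4⟩ <;>
      simp [MV, h3, h4]
  · rcases hg.mapsM (x, true) (Or.inr ⟨rfl, hx⟩) with ⟨h3, h4⟩ | ⟨h3, h4⟩ <;>
      simp [MV, h3, h4]

lemma pv_seq (hf : IsSij S T f) (hg : IsSij T U g) {p : α × Bool}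
    (hp : PV S T U (start p)) :
    ∀ {n : ℕ} {st : α × Fin 3 × Bool}, seq f g (start p) n = some st → PV S T U st := by
  intro n
  induction n with
  | zero => intro st h; simp [seq] at h; subst h; exact hp
  | succ n ih =>
    intro st h
    obtain ⟨b, hb1, hb2⟩ := seq_succ_some h
    exact pv_step hf hg (ih hb1) hb2

lemma mv_seq (hf : IsSij S T f) (hg : IsSij T U g) {p : α × Bool}
    (hp : MV S T U (start p)) :
    ∀ {n : ℕ} {st : α × Fin 3 × Bool}, seq f g (start p) n = some st → MV S T U st := by
  intro n
  induction n with
  | zero => intro st h; simp [seq] at h; subst h; exact hp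
  | succ n ih =>
    intro st h
    obtain ⟨b, hb1, hb2⟩ := seq_succ_some h
    exact mv_step hf hg (ih hb1) hb2

lemma pv_start {p : α × Bool} (h : memP S U p) : PV (α := α) S T U (start p) := by
  rcases h with ⟨h1, h2⟩ | ⟨h1, h2⟩ <;> simp [start, PV, h1, h2]

lemma mv_start {p : α × Bool} (h : memM S U p) : MV (α := α) S T U (start p) := by
  rcases h with ⟨h1, h2⟩ | ⟨h1, h2⟩ <;> simp [start, MV, h1, h2]

lemma exists_terminal (hf : IsSij S T f) (hg : IsSij T U g) {p : α × Bool}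
    (hpv : PV S T U (start p) ∨ MV S T U (start p)) :
    ∃ n st, seq f g (start p) n = some st ∧ step f g st = none := by
  classical
  by_cases hall : ∀ n, ∃ st, seq f g (start p) n = some st
  · exfalso
    choose F hF using hall
    have hinv : ∀ n, (F n).1 ∈ S.1 ∪ S.2 ∪ T.1 ∪ T.2 ∪ U.1 ∪ U.2 := by
      intro n
      have h : PV S T U (F n) ∨ MV S T U (F n) := by
        rcases hpv with h | h
        · exact Or.inl (pv_seq hf hg h (hF n))
        · exact Or.inr (mv_seq hf hg h (hF n))
      rcases h with h | h <;>
        rcases h with ⟨_,_,hx⟩|⟨_,_,hx⟩|⟨_,_,hx⟩|⟨_,_,hx⟩|⟨_,_,hx⟩|⟨_,_,hx⟩ <;>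
        simp [hx]
    set big : Finset (α × Fin 3 × Bool) :=
      (S.1 ∪ S.2 ∪ T.1 ∪ T.2 ∪ U.1 ∪ U.2) ×ˢ (Finset.univ : Finset (Fin 3 × Bool))
      with hbig
    have hmem : ∀ n, n ∈ Finset.range (big.card + 1) → F n ∈ big := by
      intro n _
      rw [hbig, Finset.mem_product]
      exact ⟨hinv n, Finset.mem_univ _⟩
    obtain ⟨i, _, j, _, hne, heq⟩ :=
      Finset.exists_ne_map_eq_of_card_lt_of_maps_to (by simp) hmem
    exact hne (seq_start_inj hf.invol hg.invol (hF i) (heq ▸ hF j))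
  · push_neg at hall
    obtain ⟨n, hn⟩ := hall
    have hnone : ∃ n, seq f g (start p) n = none := by
      refine ⟨n, ?_⟩
      cases h : seq f g (start p) n with
      | none => rfl
      | some st => exact absurd h (hn st)
    have hfind : seq f g (start p) (Nat.find hnone) = none := Nat.find_spec hnone
    have hne0 : Nat.find hnone ≠ 0 := by
      intro h
      rw [h] at hfind
      simp [seq] at hfind
    obtain ⟨m, hm⟩ := Nat.exists_eq_succ_of_ne_zero hne0
    have hmlt : ¬ seq f g (start p) m = none := Nat.find_min hnone (by omega)
    obtain ⟨st, hst⟩ := Option.ne_none_iff_exists'.mp hmlt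
    refine ⟨m, st, hst, ?_⟩
    rw [hm, seq_succ, hst] at hfind
    simpa using hfind

end Helpers3
section Helpers4

variable {S T U : SignedSet α} {f g : α × Bool → α × Bool}

lemma seq_none_mono {s : α × Fin 3 × Bool} {n m : ℕ} (h : seq f g s n = none)
    (hnm : n ≤ m) : seq f g s m = none := by
  induction m with
  | zero => exact (Nat.le_zero.mp hnm) ▸ h
  | succ m ih =>
    rcases Nat.lt_or_ge n (m + 1) with hlt | hge
    · rw [seq_succ, ih (by omega)]; rfl
    · exact (Nat.le_antisymm hnm hge) ▸ h

lemma isLast_unique {p y y' : α × Bool} (h1 : IsLast f g p y) (h2 : IsLast f g p y') :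
    y = y' := by
  obtain ⟨n, st, ha, hb, hc, hd⟩ := h1
  obtain ⟨m, st', ha', hb', hc', hd'⟩ := h2
  have hnm : n = m := by
    rcases Nat.lt_trichotomy n m with h | h | h
    · have : seq f g (start p) m = none := by
        apply seq_none_mono (n := n + 1)
        · rw [seq_succ, ha]; simpa using hb
        · omega
      rw [this] at ha'; exact absurd ha' (by simp)
    · exact h
    · have : seq f g (start p) n = none := by
        apply seq_none_mono (n := m + 1)
        · rw [seq_succ, ha']; simpa using hb'
        · omega
      rw [this] at ha; exact absurd ha (by simp)
  subst hnm
  rw [ha] at ha'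
  have hst : st = st' := by simpa using ha'
  subst hst
  have h1 : y.1 = y'.1 := hc ▸ hc'
  have h2 : y.2 = y'.2 := by
    rw [hd] at hd'
    cases hy : y.2 <;> cases hy' : y'.2 <;> rw [hy, hy'] at hd' <;> simp_all
  exact Prod.ext h1 h2

lemma isLast_rev (hf : ∀ q, f (f q) = q) (hg : ∀ q, g (g q) = q) {p y : α × Bool}
    (h : IsLast f g p y) : IsLast f g y p := by
  obtain ⟨n, st, ha, hb, hc, hd⟩ := h
  have hterm := (step_eq_none_iff st).mp hb
  have hyst : start y = flip3 st := by
    obtain ⟨x, loc, nf⟩ := st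
    simp only [flip3, start]
    refine Prod.ext hc.symm (Prod.ext ?_ ?_) <;> simp only at hd hc ⊢
    · exact hd.symm
    · rcases hterm with ⟨h1, h2⟩ | ⟨h1, h2⟩ <;> simp only at h1 h2 <;>
        cases hy : y.2 <;> rw [hy] at hd <;> simp_all
  have key : ∀ k, k ≤ n → ∃ a, seq f g (start p) (n - k) = some a ∧
      seq f g (start y) k = some (flip3 a) := by
    intro k
    induction k with
    | zero => exact fun _ => ⟨st, by simpa using ha, by rw [hyst]; rfl⟩
    | succ k ih =>
      intro hk
      obtain ⟨a, h1, h2⟩ := ih (by omega)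
      have hnk : n - k = (n - (k + 1)) + 1 := by omega
      rw [hnk] at h1
      obtain ⟨b, hb1, hb2⟩ := seq_succ_some h1
      exact ⟨b, hb1, by rw [seq_succ, h2]; exact step_flip3 hf hg hb2⟩
  obtain ⟨a, h1, h2⟩ := key n le_rfl
  have haeq : a = start p := by simpa [seq] using h1.symm
  subst haeq
  refine ⟨n, flip3 (start p), h2, ?_, ?_, ?_⟩
  · rw [step_eq_none_iff]
    cases hp : p.2 <;> simp [start, flip3, hp]
  · rfl
  · rfl

lemma scomp_eq_of_isLast {p y : α × Bool} (h : IsLast f g p y) : scomp f g p = y := by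
  have hex : ∃ y', IsLast f g p y' := ⟨y, h⟩
  simp only [scomp, dif_pos hex]
  exact isLast_unique hex.choose_spec h

lemma isLast_of_memP (hf : IsSij S T f) (hg : IsSij T U g) {p : α × Bool}
    (hp : memP S U p) : ∃ y, IsLast f g p y ∧ memM S U y := by
  obtain ⟨n, st, h1, h2⟩ := exists_terminal hf hg (Or.inl (pv_start hp))
  have hpv := pv_seq hf hg (pv_start hp) h1
  rcases (step_eq_none_iff st).mp h2 with ⟨ha, hb⟩ | ⟨ha, hb⟩
  · -- nf = true, loc = 2 : last in U⁺
    have hx : st.1 ∈ U.1 := by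
      rcases hpv with ⟨c,_,_⟩|⟨c,_,_⟩|⟨c,_,_⟩|⟨c,_,_⟩|⟨_,_,hx⟩|⟨_,c,_⟩ <;> simp_all
    exact ⟨(st.1, true), ⟨n, st, h1, h2, rfl, by simpa using hb⟩, Or.inr ⟨rfl, hx⟩⟩
  · -- nf = false, loc = 0 : last in S⁻
    have hx : st.1 ∈ S.2 := by
      rcases hpv with ⟨_,c,_⟩|⟨_,_,hx⟩|⟨c,_,_⟩|⟨c,_,_⟩|⟨c,_,_⟩|⟨c,_,_⟩ <;> simp_all
    exact ⟨(st.1, false), ⟨n, st, h1, h2, rfl, by simpa using hb⟩, Or.inl ⟨rfl, hx⟩⟩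

lemma isLast_of_memM (hf : IsSij S T f) (hg : IsSij T U g) {p : α × Bool}
    (hp : memM S U p) : ∃ y, IsLast f g p y ∧ memP S U y := by
  obtain ⟨n, st, h1, h2⟩ := exists_terminal hf hg (Or.inr (mv_start hp))
  have hpv := mv_seq hf hg (mv_start hp) h1
  rcases (step_eq_none_iff st).mp h2 with ⟨ha, hb⟩ | ⟨ha, hb⟩
  · have hx : st.1 ∈ U.2 := by
      rcases hpv with ⟨c,_,_⟩|⟨c,_,_⟩|⟨c,_,_⟩|⟨c,_,_⟩|⟨_,_,hx⟩|⟨_,c,_⟩ <;> simp_all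
    exact ⟨(st.1, true), ⟨n, st, h1, h2, rfl, by simpa using hb⟩, Or.inr ⟨rfl, hx⟩⟩
  · have hx : st.1 ∈ S.1 := by
      rcases hpv with ⟨_,c,_⟩|⟨_,_,hx⟩|⟨c,_,_⟩|⟨c,_,_⟩|⟨c,_,_⟩|⟨c,_,_⟩ <;> simp_all
    exact ⟨(st.1, false), ⟨n, st, h1, h2, rfl, by simpa using hb⟩, Or.inl ⟨rfl, hx⟩⟩

lemma isLast_self (hf : IsSij S T f) (hg : IsSij T U g) {p : α × Bool}
    (hp : ¬ valid S U p) : IsLast f g p p := by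
  have h1 : ¬ memP S U p := fun h => hp (Or.inl h)
  have h2 : ¬ memM S U p := fun h => hp (Or.inr h)
  cases hp2 : p.2 with
  | false =>
    have hn1 : p.1 ∉ S.1 := fun h => h1 (Or.inl ⟨hp2, h⟩)
    have hn2 : p.1 ∉ S.2 := fun h => h2 (Or.inl ⟨hp2, h⟩)
    have hfx : f (p.1, false) = (p.1, false) := by
      apply hf.fix
      simp [valid, memP, memM, hn1, hn2]
    refine ⟨1, (p.1, 0, false), ?_, ?_, rfl, by simp [hp2]⟩
    · show (seq f g (start p) 0).bind (step f g) = _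
      simp [seq, start, hp2, step, hfx]
    · rw [step_eq_none_iff]; exact Or.inr ⟨rfl, rfl⟩
  | true =>
    have hn1 : p.1 ∉ U.2 := fun h => h1 (Or.inr ⟨hp2, h⟩)
    have hn2 : p.1 ∉ U.1 := fun h => h2 (Or.inr ⟨hp2, h⟩)
    have hgx : g (p.1, true) = (p.1, true) := by
      apply hg.fix
      simp [valid, memP, memM, hn1, hn2]
    refine ⟨1, (p.1, 2, true), ?_, ?_, rfl, by simp [hp2]⟩
    · show (seq f g (start p) 0).bind (step f g) = _
      simp [seq, start, hp2, step, hgx]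
    · rw [step_eq_none_iff]; exact Or.inl ⟨rfl, rfl⟩

end Helpers4
/-- Composition of sijections is well defined: given sijections `φ : S ⇒ T` and
`ψ : T ⇒ U`, the map sending each element of `S ⊔ U` to the last well-defined element
of the alternating sequence `s, φ(s), ψ(φ(s)), φ(ψ(φ(s))), …` is a sijection from `S`
to `U`. -/
theorem scomp_isSij {S T U : SignedSet α} {f g : α × Bool → α × Bool}
    (hf : IsSij S T f) (hg : IsSij T U g) :
    IsSij S U (scomp f g) ∧ ∀ p, valid S U p → IsLast f g p (scomp f g p) := by
  constructor
  · refine ⟨?_, ?_, ?_, ?_⟩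
    · intro p
      by_cases h : ∃ y, IsLast f g p y
      · have h1 : scomp f g p = h.choose := by simp only [scomp, dif_pos h]
        have hl2 : IsLast f g h.choose p := isLast_rev hf.invol hg.invol h.choose_spec
        rw [h1, scomp_eq_of_isLast hl2]
      · have h1 : scomp f g p = p := by simp only [scomp, dif_neg h]
        rw [h1, h1]
    · intro p hp
      obtain ⟨y, h1, h2⟩ := isLast_of_memP hf hg hp
      rw [scomp_eq_of_isLast h1]; exact h2
    · intro p hp
      obtain ⟨y, h1, h2⟩ := isLast_of_memM hf hg hp
      rw [scomp_eq_of_isLast h1]; exact h2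
    · intro p hp
      exact scomp_eq_of_isLast (isLast_self hf hg hp)
  · intro p hp
    rcases hp with h | h
    · obtain ⟨y, h1, -⟩ := isLast_of_memP hf hg h
      rw [scomp_eq_of_isLast h1]; exact h1
    · obtain ⟨y, h1, -⟩ := isLast_of_memM hf hg h
      rw [scomp_eq_of_isLast h1]; exact h1
end

section
/- Composition of sijections is associative: for sijections φ : S ⇒ T, ψ : T ⇒ U, ξ : U ⇒ V, one has ξ ∘ (ψ ∘ φ) = (ξ ∘ ψ) ∘ φ. -/
variable {α : Type}

/-!
All three compositions are read off one run: the alternating sequence through the whole chain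
`f, g, h`, whose states record a level and a direction of travel. The alternating sequence of
`(scomp f g, h)` is a contraction of that run, because one application of `scomp f g` is an
entire inner run through `f, g`, and the inner run ends exactly where `scomp f g` sends its
argument; likewise for `(f, scomp g h)`. Hence both sides are the last element of the run
through `f, g, h`.

The run terminates by reversibility: since sijections are involutions, turning around and
stepping again undoes a step. So the step is injective and never leads back to a starting
state, while the run stays in the finite set of states over the supports.
-/

open StateTransition Relation

theorem StateTransition.eval_dom_of_injective {σ : Type*} {f : σ → Option σ} {a : σ}
    (hfin : {b | Reaches f a b}.Finite)
    (hinj : ∀ b₁ b₂ c, c ∈ f b₁ → c ∈ f b₂ → b₁ = b₂) (ha : ∀ b, a ∉ f b) :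
    (eval f a).Dom := by
  -- Otherwise `f` is an injective self-map of the finite set of reachable states, hence onto,
  -- and `a` would have a predecessor.
  by_contra hdiv
  have hnext : ∀ b, Reaches f a b → ∃ c, c ∈ f b := fun b hb =>
    Option.ne_none_iff_exists'.mp fun hb' => hdiv (Part.dom_iff_mem.2 ⟨b, mem_eval.2 ⟨hb, hb'⟩⟩)
  choose! next hnext using hnext
  have hmaps : Set.MapsTo next {b | Reaches f a b} {b | Reaches f a b} :=
    fun b hb => hb.tail (hnext b hb)
  have hbij := (hfin.injOn_iff_bijOn_of_mapsTo hmaps).mp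
    fun b₁ hb₁ b₂ hb₂ h => hinj b₁ b₂ _ (hnext b₁ hb₁) (h ▸ hnext b₂ hb₂)
  obtain ⟨b, hb, hab⟩ := hbij.surjOn (ReflTransGen.refl : Reaches f a a)
  exact ha b (hab ▸ hnext b hb)

theorem StateTransition.reaches₁_of_mem_eval {σ : Type*} {f : σ → Option σ} {a b c : σ}
    (hb : b ∈ eval f a) (hc : c ∈ f a) : Reaches₁ f a b := by
  obtain ⟨hab, hb⟩ := mem_eval.1 hb
  rcases ReflTransGen.cases_head hab with rfl | ⟨c', hc', hcb⟩
  · simp_all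
  · exact TransGen.head' hc' hcb

def Nat.succAbove (k m : ℕ) : ℕ := if m < k then m else m + 1

section List

variable {β : Type*}

theorem List.getElem?_append_append_length_add {L₁ L L₂ : List β} {i : ℕ} {b : β}
    (h : L[i]? = some b) : (L₁ ++ L ++ L₂)[L₁.length + i]? = some b := by
  rw [List.append_assoc, List.getElem?_append_right (by omega), Nat.add_sub_cancel_left,
    List.getElem?_append_left (List.getElem?_eq_some_iff.mp h).1, h]

theorem List.getElem?_append_cons_cons_succAbove (L₁ L₂ : List β) (b₁ b₂ c : β) {m : ℕ}
    (hm : m ≠ L₁.length) :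
    (L₁ ++ b₁ :: b₂ :: L₂)[L₁.length.succAbove m]? = (L₁ ++ c :: L₂)[m]? := by
  unfold Nat.succAbove
  split_ifs with h
  · simp [List.getElem?_append_left h]
  · rw [List.getElem?_append_right (by omega), List.getElem?_append_right (by omega)]
    obtain ⟨j, rfl⟩ : ∃ j, m = L₁.length + 1 + j := ⟨m - L₁.length - 1, by omega⟩
    simp [show L₁.length + 1 + j + 1 - L₁.length = j + 2 by omega,
      show L₁.length + 1 + j - L₁.length = j + 1 by omega]

end List

theorem IsSij.fst_eq_or_mem {S T : SignedSet α} {f : α × Bool → α × Bool} (hf : IsSij S T f)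
    (q : α × Bool) : (f q).1 = q.1 ∨ (f q).1 ∈ (↑S.1 ∪ ↑S.2 ∪ ↑T.1 ∪ ↑T.2 : Set α) := by
  by_cases hq : valid S T q
  · right
    rcases hq with hq | hq
    · rcases hf.mapsP q hq with ⟨-, hm⟩ | ⟨-, hm⟩ <;> simp [hm]
    · rcases hf.mapsM q hq with ⟨-, hm⟩ | ⟨-, hm⟩ <;> simp [hm]
  · exact Or.inl (congrArg Prod.fst (hf.fix q hq))

namespace Zigzag

def arrive (i : ℕ) (q : α × Bool) : α × ℕ × Bool := (q.1, if q.2 then i + 1 else i, q.2)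

/-- The alternating sequence through a chain of sijections `L`: the state `(x, i, d)` is the
element `x` at level `i`, about to move right (`d = true`, applying `L[i]` to `(x, false)`) or
left (`d = false`, applying `L[i - 1]` to `(x, true)`). -/
def next (L : List (α × Bool → α × Bool)) : α × ℕ × Bool → Option (α × ℕ × Bool)
  | (x, i, true) => L[i]?.map fun φ => arrive i (φ (x, false))
  | (x, i + 1, false) => L[i]?.map fun φ => arrive i (φ (x, true))
  | (_, 0, false) => none

def initial (L : List (α × Bool → α × Bool)) (p : α × Bool) : α × ℕ × Bool :=
  (p.1, if p.2 then L.length else 0, !p.2)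

def final (L : List (α × Bool → α × Bool)) (y : α × Bool) : α × ℕ × Bool :=
  (y.1, if y.2 then L.length else 0, y.2)

def turn (s : α × ℕ × Bool) : α × ℕ × Bool := (s.1, s.2.1, !s.2.2)

def shift (k : ℕ) (s : α × ℕ × Bool) : α × ℕ × Bool := (s.1, k + s.2.1, s.2.2)

def expand (k : ℕ) (s : α × ℕ × Bool) : α × ℕ × Bool := (s.1, (k + 1).succAbove s.2.1, s.2.2)

@[simp]
theorem turn_turn (s : α × ℕ × Bool) : turn (turn s) = s := by
  simp [turn]

theorem final_injective (L : List (α × Bool → α × Bool)) : Function.Injective (final L) := by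
  rintro ⟨x, b⟩ ⟨y, c⟩ h
  simp_all [final]

theorem shift_arrive (k i : ℕ) (q : α × Bool) : shift k (arrive i q) = arrive (k + i) q := by
  obtain ⟨y, _ | _⟩ := q <;> rfl

theorem shift_turn (k : ℕ) (s : α × ℕ × Bool) : shift k (turn s) = turn (shift k s) := rfl

theorem expand_arrive {k m : ℕ} (hm : m ≠ k) (q : α × Bool) :
    expand k (arrive m q) = arrive (k.succAbove m) q := by
  obtain ⟨y, _ | _⟩ := q <;> simp only [expand, arrive, Nat.succAbove] <;> split_ifs <;>
    first | rfl | omega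

theorem expand_turn (k : ℕ) (s : α × ℕ × Bool) : expand k (turn s) = turn (expand k s) := rfl

variable {L : List (α × Bool → α × Bool)}

theorem next_turn_arrive (i : ℕ) (q : α × Bool) :
    next L (turn (arrive i q)) = L[i]?.map fun φ => arrive i (φ q) := by
  obtain ⟨y, _ | _⟩ := q <;> rfl

theorem exists_of_mem_next {s t : α × ℕ × Bool} (h : t ∈ next L s) :
    ∃ i q, ∃ φ ∈ L[i]?, s = turn (arrive i q) ∧ t = arrive i (φ q) := by
  obtain ⟨x, _ | i, _ | _⟩ := s <;>
    simp only [next, Option.mem_def, Option.map_eq_some_iff, reduceCtorEq] at h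
  all_goals
    obtain ⟨φ, hφ, rfl⟩ := h
    exact ⟨_, _, φ, hφ, rfl, rfl⟩

theorem turn_mem_next_turn (hL : ∀ φ ∈ L, Function.Involutive φ) {s t : α × ℕ × Bool}
    (h : t ∈ next L s) : turn s ∈ next L (turn t) := by
  obtain ⟨i, q, φ, hφ, rfl, rfl⟩ := exists_of_mem_next h
  rw [Option.mem_def, next_turn_arrive, Option.mem_def.mp hφ, Option.map_some,
    hL φ (List.mem_of_getElem? hφ) q, turn_turn]

theorem next_injective (hL : ∀ φ ∈ L, Function.Involutive φ) (s₁ s₂ t : α × ℕ × Bool)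
    (h₁ : t ∈ next L s₁) (h₂ : t ∈ next L s₂) : s₁ = s₂ := by
  simpa using
    congrArg turn (Option.mem_unique (turn_mem_next_turn hL h₁) (turn_mem_next_turn hL h₂))

theorem initial_not_mem_next (p : α × Bool) (s : α × ℕ × Bool) : initial L p ∉ next L s := by
  intro h
  obtain ⟨i, q, φ, hφ, -, h⟩ := exists_of_mem_next h
  have hi := (List.getElem?_eq_some_iff.mp hφ).1
  obtain ⟨x, _ | _⟩ := p <;> cases hq : (φ q).2 <;> simp [initial, arrive, hq] at h
  omega

open Set in
theorem eval_dom (hL : ∀ φ ∈ L, Function.Involutive φ) {A : Set α} (hA : A.Finite)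
    (hLA : ∀ φ ∈ L, ∀ q, (φ q).1 = q.1 ∨ (φ q).1 ∈ A) (p : α × Bool) :
    (eval (next L) (initial L p)).Dom := by
  refine eval_dom_of_injective ?_ (next_injective hL) (initial_not_mem_next p)
  have hsub : {s | Reaches (next L) (initial L p) s} ⊆
      insert p.1 A ×ˢ (Iic L.length ×ˢ univ) := by
    intro s hs
    induction hs with
    | refl => simp only [initial, mem_prod, mem_insert_iff, mem_Iic]; split <;> simp
    | @tail s t _ hst ih =>
      obtain ⟨i, q, φ, hφ, rfl, rfl⟩ := exists_of_mem_next hst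
      have hi := (List.getElem?_eq_some_iff.mp hφ).1
      refine ⟨?_, ?_, trivial⟩
      · rcases hLA φ (List.mem_of_getElem? hφ) q with h | h
        · exact h ▸ ih.1
        · exact mem_insert_of_mem _ h
      · simp only [arrive, mem_Iic]; split <;> omega
  exact ((hA.insert p.1).prod ((finite_Iic _).prod finite_univ)).subset hsub

theorem eval_dom_of_isSij (hL : ∀ φ ∈ L, ∃ S T : SignedSet α, IsSij S T φ) (p : α × Bool) :
    (eval (next L) (initial L p)).Dom := by
  choose! S T hST using hL
  refine eval_dom (fun φ hφ => (hST φ hφ).invol)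
    (A := ⋃ φ ∈ L, (↑(S φ).1 ∪ ↑(S φ).2 ∪ ↑(T φ).1 ∪ ↑(T φ).2 : Set α)) ?_ ?_ p
  · exact L.finite_toSet.biUnion fun φ _ => by simp [Finset.finite_toSet]
  · exact fun φ hφ q =>
      ((hST φ hφ).fst_eq_or_mem q).imp_right fun h => Set.mem_iUnion₂.2 ⟨φ, hφ, h⟩

theorem shift_mem_next (L₁ L₂ : List (α × Bool → α × Bool)) {s t : α × ℕ × Bool}
    (h : t ∈ next L s) : shift L₁.length t ∈ next (L₁ ++ L ++ L₂) (shift L₁.length s) := by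
  obtain ⟨i, q, φ, hφ, rfl, rfl⟩ := exists_of_mem_next h
  rw [shift_turn, shift_arrive, shift_arrive, Option.mem_def, next_turn_arrive,
    List.getElem?_append_append_length_add hφ, Option.map_some]

theorem expand_initial {L' : List (α × Bool → α × Bool)} {k : ℕ} (hk : k < L.length)
    (hL : L'.length = L.length + 1) (p : α × Bool) : expand k (initial L p) = initial L' p := by
  obtain ⟨x, _ | _⟩ := p <;> simp [expand, initial, Nat.succAbove, hL, hk.not_ge]

theorem expand_final {L' : List (α × Bool → α × Bool)} {k : ℕ} (hk : k < L.length)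
    (hL : L'.length = L.length + 1) (y : α × Bool) : expand k (final L y) = final L' y := by
  obtain ⟨x, _ | _⟩ := y <;> simp [expand, final, Nat.succAbove, hL, hk.not_ge]

variable {φ ψ χ : α × Bool → α × Bool}

theorem expand_turn_arrive_self (k : ℕ) (q : α × Bool) :
    expand k (turn (arrive k q)) = shift k (initial [φ, ψ] q) := by
  obtain ⟨y, _ | _⟩ := q <;> simp [expand, turn, arrive, shift, initial, Nat.succAbove]

theorem expand_arrive_self (k : ℕ) (y : α × Bool) :
    expand k (arrive k y) = shift k (final [φ, ψ] y) := by
  obtain ⟨y, _ | _⟩ := y <;> simp [expand, arrive, shift, final, Nat.succAbove]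

theorem respects_merge
    (hχ : ∀ q, final [φ, ψ] (χ q) ∈ eval (next [φ, ψ]) (initial [φ, ψ] q))
    (L₁ L₂ : List (α × Bool → α × Bool)) :
    Respects (next (L₁ ++ χ :: L₂)) (next (L₁ ++ φ :: ψ :: L₂))
      fun a b => expand L₁.length a = b := by
  have hstep : ∀ m q, FRespects (next (L₁ ++ φ :: ψ :: L₂)) (expand L₁.length)
      (expand L₁.length (turn (arrive m q))) (next (L₁ ++ χ :: L₂) (turn (arrive m q))) := by
    intro m q
    rw [next_turn_arrive]
    by_cases hm : m = L₁.length
    · -- a step through `χ` is the whole zigzag through `φ, ψ`, shifted up to level `m`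
      subst hm
      rw [List.getElem?_append_right le_rfl, Nat.sub_self, List.getElem?_cons_zero,
        Option.map_some, FRespects, expand_turn_arrive_self, expand_arrive_self]
      obtain ⟨c, hc⟩ : ∃ c, c ∈ next [φ, ψ] (initial [φ, ψ] q) := by
        obtain ⟨x, _ | _⟩ := q <;> exact ⟨_, rfl⟩
      exact (reaches₁_of_mem_eval (hχ q) hc).lift (shift L₁.length)
        fun a b h => by simpa using shift_mem_next L₁ L₂ h
    · rw [← List.getElem?_append_cons_cons_succAbove L₁ L₂ φ ψ χ hm, expand_turn,
        expand_arrive hm]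
      cases h : (L₁ ++ φ :: ψ :: L₂)[L₁.length.succAbove m]? with
      | none => simp [FRespects, next_turn_arrive, h]
      | some φ₀ => exact TransGen.single (by simp [expand_arrive hm, next_turn_arrive, h])
  rw [fun_respects]
  rintro ⟨x, _ | m, _ | _⟩
  · rfl
  · exact hstep 0 (x, false)
  · exact hstep m (x, true)
  · exact hstep (m + 1) (x, false)

end Zigzag

section TwoMaps

variable {f g : α × Bool → α × Bool}

/-- `step` records which map comes next rather than a direction; the two differ exactly at the
middle level. -/
def toZigzag (s : α × Fin 3 × Bool) : α × ℕ × Bool :=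
  (s.1, s.2.1, if s.2.1 = 1 then !s.2.2 else s.2.2)

theorem step_eq_none_iff_s2 {s : α × Fin 3 × Bool} :
    step f g s = none ↔ s.2.1 = if s.2.2 then 2 else 0 := by
  obtain ⟨x, i, _ | _⟩ := s <;> fin_cases i <;> simp [step]

theorem reaches_iff_exists_seq {s t : α × Fin 3 × Bool} :
    Reaches (step f g) s t ↔ ∃ n, seq f g s n = some t := by
  constructor
  · intro h
    induction h with
    | refl => exact ⟨0, rfl⟩
    | tail _ hbc ih =>
      obtain ⟨n, hn⟩ := ih
      exact ⟨n + 1, by rw [seq, hn]; exact hbc⟩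
  · rintro ⟨n, hn⟩
    induction n generalizing t with
    | zero => cases hn; exact ReflTransGen.refl
    | succ n ih =>
      obtain ⟨b, hb, hbt⟩ := Option.bind_eq_some_iff.mp hn
      exact (ih hb).tail hbt

theorem respects_toZigzag (f g : α × Bool → α × Bool) :
    Respects (step f g) (Zigzag.next [f, g]) fun a b => toZigzag a = b := by
  rw [fun_respects]
  rintro ⟨x, i, _ | _⟩ <;> fin_cases i <;> simp [FRespects, step, toZigzag]
  all_goals first
    | rfl
    | refine TransGen.single ?_
      simp only [Zigzag.next, Zigzag.arrive]
      split <;> simp_all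

theorem toZigzag_start (p : α × Bool) : toZigzag (start p) = Zigzag.initial [f, g] p := by
  obtain ⟨x, _ | _⟩ := p <;> rfl

theorem toZigzag_of_step_eq_none {s : α × Fin 3 × Bool} (hs : step f g s = none) :
    toZigzag s = Zigzag.final [f, g] (s.1, s.2.2) := by
  obtain ⟨x, i, _ | _⟩ := s <;> fin_cases i <;> simp_all [step_eq_none_iff_s2] <;> rfl

theorem IsLast.final_mem_eval {p y : α × Bool} (h : IsLast f g p y) :
    Zigzag.final [f, g] y ∈ eval (Zigzag.next [f, g]) (Zigzag.initial [f, g] p) := by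
  obtain ⟨n, s, hn, hs, h₁, h₂⟩ := h
  have hy : y = (s.1, s.2.2) := by
    rw [step_eq_none_iff_s2] at hs
    obtain ⟨y₁, _ | _⟩ := y <;> cases hb : s.2.2 <;> simp_all
  obtain ⟨_, rfl, hmem⟩ := tr_eval (respects_toZigzag f g) rfl
    (mem_eval.2 ⟨reaches_iff_exists_seq.2 ⟨n, hn⟩, hs⟩)
  rwa [toZigzag_start, toZigzag_of_step_eq_none hs, ← hy] at hmem

theorem exists_isLast {p : α × Bool}
    (hdom : (eval (Zigzag.next [f, g]) (Zigzag.initial [f, g] p)).Dom) : ∃ y, IsLast f g p y := by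
  rw [← toZigzag_start, tr_eval_dom (respects_toZigzag f g) rfl] at hdom
  obtain ⟨s, hmem⟩ := Part.dom_iff_mem.1 hdom
  obtain ⟨hreach, hs⟩ := mem_eval.1 hmem
  obtain ⟨n, hn⟩ := reaches_iff_exists_seq.1 hreach
  exact ⟨(s.1, s.2.2), n, s, hn, hs, rfl, step_eq_none_iff_s2.1 hs⟩

theorem final_scomp_mem_eval {p : α × Bool}
    (hdom : (eval (Zigzag.next [f, g]) (Zigzag.initial [f, g] p)).Dom) :
    Zigzag.final [f, g] (scomp f g p) ∈ eval (Zigzag.next [f, g]) (Zigzag.initial [f, g] p) := by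
  have h := exists_isLast hdom
  unfold scomp
  rw [dif_pos h]
  exact h.choose_spec.final_mem_eval

theorem final_scomp_mem_eval_of_isSij {S T U : SignedSet α} (hf : IsSij S T f) (hg : IsSij T U g)
    (p : α × Bool) :
    Zigzag.final [f, g] (scomp f g p) ∈ eval (Zigzag.next [f, g]) (Zigzag.initial [f, g] p) := by
  refine final_scomp_mem_eval (Zigzag.eval_dom_of_isSij ?_ p)
  simp only [List.forall_mem_cons, List.not_mem_nil, IsEmpty.forall_iff, implies_true, and_true]
  exact ⟨⟨S, T, hf⟩, T, U, hg⟩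

end TwoMaps

theorem Zigzag.final_scomp_mem_eval_of_merge {S T U : SignedSet α}
    {φ ψ χ₁ χ₂ : α × Bool → α × Bool} (hφ : IsSij S T φ) (hψ : IsSij T U ψ)
    (L₁ L₂ : List (α × Bool → α × Bool)) (hL : L₁ ++ scomp φ ψ :: L₂ = [χ₁, χ₂])
    {p : α × Bool}
    (hdom : (eval (next (L₁ ++ φ :: ψ :: L₂)) (initial (L₁ ++ φ :: ψ :: L₂) p)).Dom) :
    final (L₁ ++ φ :: ψ :: L₂) (scomp χ₁ χ₂ p) ∈
      eval (next (L₁ ++ φ :: ψ :: L₂)) (initial (L₁ ++ φ :: ψ :: L₂) p) := by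
  have hlen := congrArg List.length hL
  simp only [List.length_append, List.length_cons, List.length_nil] at hlen
  have hk : L₁.length < [χ₁, χ₂].length := by simp; omega
  have hlen' : (L₁ ++ φ :: ψ :: L₂).length = [χ₁, χ₂].length + 1 := by simp; omega
  have H := respects_merge (final_scomp_mem_eval_of_isSij hφ hψ) L₁ L₂
  rw [hL] at H
  rw [← expand_initial hk hlen' p, tr_eval_dom H rfl] at hdom
  obtain ⟨_, rfl, hmem⟩ := tr_eval H rfl (final_scomp_mem_eval hdom)
  rwa [expand_final hk hlen', expand_initial hk hlen'] at hmem

/-- Composition of sijections is associative: for sijections `φ : S ⇒ T`, `ψ : T ⇒ U`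
and `ξ : U ⇒ V`, one has `ξ ∘ (ψ ∘ φ) = (ξ ∘ ψ) ∘ φ` (as sijections from `S` to `V`,
i.e. as maps on the support of `S ⊔ V`). -/
theorem scomp_assoc {S T U V : SignedSet α} {f g h : α × Bool → α × Bool}
    (hf : IsSij S T f) (hg : IsSij T U g) (hh : IsSij U V h) :
    ∀ p, valid S V p → scomp (scomp f g) h p = scomp f (scomp g h) p := by
  intro p _
  have hdom : (eval (Zigzag.next [f, g, h]) (Zigzag.initial [f, g, h] p)).Dom := by
    refine Zigzag.eval_dom_of_isSij ?_ p
    simp only [List.forall_mem_cons, List.not_mem_nil, IsEmpty.forall_iff, implies_true, and_true]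
    exact ⟨⟨S, T, hf⟩, ⟨T, U, hg⟩, U, V, hh⟩
  exact Zigzag.final_injective [f, g, h] <| Part.mem_unique
    (Zigzag.final_scomp_mem_eval_of_merge hf hg [] [h] rfl hdom)
    (Zigzag.final_scomp_mem_eval_of_merge hg hh [f] [] rfl hdom)
end

section
/- Compatibility is preserved under composition: if sijections φ : S ⇒ T and ψ : T ⇒ U are both compatible with a statistic η defined on the supports of S, T, U, then the composition ψ∘φ is compatible with η. -/
variable {α : Type}

/-- A statistic on the supports of `S` and `T`, given by its values `ηa` on elements of
`S` (tag `false`) and `ηb` on elements of `T` (tag `true`). -/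
def tstat {κ : Type} (ηa ηb : α → κ) : α × Bool → κ := fun p => if p.2 then ηb p.1 else ηa p.1

/-- Compatibility is preserved under composition: if `φ : S ⇒ T` and `ψ : T ⇒ U` are
sijections compatible with a statistic `η` (with values `ηS`, `ηT`, `ηU` on the supports
of `S`, `T`, `U`), then `ψ ∘ φ` is compatible with `η`. -/
theorem scomp_compat {κ : Type} {S T U : SignedSet α} {f g : α × Bool → α × Bool}
    (ηS ηT ηU : α → κ)
    (hf : IsSij S T f) (hg : IsSij T U g)
    (hcf : ∀ p, valid S T p → tstat ηS ηT (f p) = tstat ηS ηT p)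
    (hcg : ∀ p, valid T U p → tstat ηT ηU (g p) = tstat ηT ηU p) :
    ∀ p, valid S U p → tstat ηS ηU (scomp f g p) = tstat ηS ηU p := by
  have hf' : ∀ p, tstat ηS ηT (f p) = tstat ηS ηT p := by
    intro p
    by_cases h : valid S T p
    · exact hcf p h
    · rw [hf.fix p h]
  have hg' : ∀ p, tstat ηT ηU (g p) = tstat ηT ηU p := by
    intro p
    by_cases h : valid T U p
    · exact hcg p h
    · rw [hg.fix p h]
  set η3 : α × Fin 3 × Bool → κ := fun q =>
    if q.2.1 = 0 then ηS q.1 else if q.2.1 = 1 then ηT q.1 else ηU q.1 with hη3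
  have hstep : ∀ q q', step f g q = some q' → η3 q' = η3 q := by
    rintro ⟨x, loc, nf⟩ q' h
    cases nf
    · fin_cases loc <;> simp [step] at h <;> subst h
      · have := hg' (x, false)
        cases hb : (g (x, false)).2 <;>
          simp [tstat, hb, hη3] at this ⊢ <;> simp [this]
      · have := hg' (x, true)
        cases hb : (g (x, true)).2 <;>
          simp [tstat, hb, hη3] at this ⊢ <;> simp [this]
    · fin_cases loc <;> simp [step] at h <;> subst h
      · have := hf' (x, false)
        cases hb : (f (x, false)).2 <;>
          simp [tstat, hb, hη3] at this ⊢ <;> simp [this]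
      · have := hf' (x, true)
        cases hb : (f (x, true)).2 <;>
          simp [tstat, hb, hη3] at this ⊢ <;> simp [this]
  have hseq : ∀ st0 n st, seq f g st0 n = some st → η3 st = η3 st0 := by
    intro st0 n
    induction n with
    | zero => intro st h; simp [seq] at h; rw [h]
    | succ n ih =>
      intro st h
      rw [seq] at h
      rcases h' : seq f g st0 n with _ | st'
      · rw [h'] at h; simp at h
      · rw [h'] at h; simp at h
        exact (hstep st' st h).trans (ih st' h')
  intro p _
  unfold scomp
  split
  case isFalse => rfl
  case isTrue h =>
    obtain ⟨n, st, h1, _, h3, h4⟩ := h.choose_spec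
    have e1 : η3 st = η3 (start p) := hseq _ n st h1
    have e2 : η3 (start p) = tstat ηS ηU p := by
      cases hp : p.2 <;> simp [start, hp, tstat, hη3]
    have e3 : η3 st = tstat ηS ηU h.choose := by
      cases hy : h.choose.2 <;> rw [hy] at h4 <;>
        simp [tstat, hy, hη3, h4, h3]
    rw [← e3, e1, e2]
end

section
/- For integers a₁,…,aₙ, b₁,…,bₙ and x, there is a sijection β from [a₁,b₁)×[a₂,b₂)×⋯×[aₙ,bₙ) to the disjoint union over m ∈ S₁×S₂×⋯×Sₙ of [m₁,m₂)×[m₂,m₃)×⋯×[mₙ₋₁,mₙ)×[mₙ,x), where Sᵢ = ({aᵢ},{bᵢ}), and β is compatible with the normal (coordinatewise inclusion into ℤⁿ) statistic. -/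
/-- `x` lies in the signed half-open interval `[p, q)`. -/
def between (p q x : ℤ) : Prop := (p ≤ x ∧ x < q) ∨ (q ≤ x ∧ x < p)

/-- The sign of `x` as an element of the signed interval `[p, q)`. -/
def isign (p q x : ℤ) : ℤ := if p ≤ x then 1 else -1

/-- Membership in the product `[a₁,b₁) × [a₂,b₂) × ⋯ × [aₙ,bₙ)` of signed intervals
(entries of the tuple beyond `n` are normalised to `0`). -/
def LMem (n : ℕ) (a b : ℕ → ℤ) (f : ℕ → ℤ) : Prop :=
  (∀ i < n, between (a i) (b i) (f i)) ∧ (∀ i, n ≤ i → f i = 0)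

/-- The sign of an element of `[a₁,b₁) × ⋯ × [aₙ,bₙ)`. -/
def LSgn (n : ℕ) (a b : ℕ → ℤ) (f : ℕ → ℤ) : ℤ :=
  ∏ i ∈ Finset.range n, isign (a i) (b i) (f i)

/-- The endpoint chosen by `m` at position `i`: `mᵢ ∈ Sᵢ = ({aᵢ}, {bᵢ})`, encoded by a
Boolean (`false ↦ aᵢ`, `true ↦ bᵢ`). -/
def mEnd (a b : ℕ → ℤ) (m : ℕ → Bool) (i : ℕ) : ℤ := if m i then b i else a i

/-- The right endpoint of the `i`-th interval `[mᵢ, mᵢ₊₁)` (with `mₙ₊₁ := x`). -/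
def mUp (n : ℕ) (a b : ℕ → ℤ) (x : ℤ) (m : ℕ → Bool) (i : ℕ) : ℤ :=
  if i + 1 = n then x else mEnd a b m (i + 1)

/-- Membership in the disjoint union over `m ∈ S₁ × ⋯ × Sₙ` of
`[m₁,m₂) × [m₂,m₃) × ⋯ × [mₙ₋₁,mₙ) × [mₙ,x)`. -/
def RMem (n : ℕ) (a b : ℕ → ℤ) (x : ℤ) (p : (ℕ → Bool) × (ℕ → ℤ)) : Prop :=
  (∀ i < n, between (mEnd a b p.1 i) (mUp n a b x p.1 i) (p.2 i)) ∧
  (∀ i, n ≤ i → p.2 i = 0) ∧ (∀ i, n ≤ i → p.1 i = false)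

/-- The sign of an element of the disjoint union with signed index:
the sign of the index `m` (`(−1)^{#bᵢ’s chosen}`) times the sign of the tuple in the
product of intervals. -/
def RSgn (n : ℕ) (a b : ℕ → ℤ) (x : ℤ) (p : (ℕ → Bool) × (ℕ → ℤ)) : ℤ :=
  (-1) ^ ((Finset.range n).filter (fun i => p.1 i = true)).card *
    ∏ i ∈ Finset.range n, isign (mEnd a b p.1 i) (mUp n a b x p.1 i) (p.2 i)

-- auxiliary
instance (p q t : ℤ) : Decidable (between p q t) :=
  inferInstanceAs (Decidable ((p ≤ t ∧ t < q) ∨ (q ≤ t ∧ t < p)))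

namespace BetaAux

def bInd (p q t : ℤ) : ℤ := if between p q t then isign p q t else 0

lemma bInd_eq (p q t : ℤ) :
    bInd p q t = (if p ≤ t then (1:ℤ) else 0) - (if q ≤ t then 1 else 0) := by
  simp only [bInd, between, isign]
  split_ifs <;> omega

lemma isign_cases (p q t : ℤ) : isign p q t = 1 ∨ isign p q t = -1 := by
  simp only [isign]; split_ifs <;> simp

lemma prod_isign_cases (s : Finset ℕ) (g h u : ℕ → ℤ) :
    (∏ i ∈ s, isign (g i) (h i) (u i)) = 1 ∨ (∏ i ∈ s, isign (g i) (h i) (u i)) = -1 :=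
  Finset.prod_induction _ (fun z => z = 1 ∨ z = -1)
    (by rintro a b (rfl|rfl) (rfl|rfl) <;> simp) (Or.inl rfl)
    (fun i _ => isign_cases _ _ _)

lemma neg_one_pow_cases (c : ℕ) : ((-1:ℤ)^c = 1) ∨ ((-1:ℤ)^c = -1) :=
  (Nat.even_or_odd c).elim (fun h => Or.inl h.neg_one_pow) (fun h => Or.inr h.neg_one_pow)

def mS (S : Finset ℕ) : ℕ → Bool := fun i => decide (i ∈ S)

lemma mS_end (a b : ℕ → ℤ) (S : Finset ℕ) (i : ℕ) :
    mEnd a b (mS S) i = if i ∈ S then b i else a i := by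
  simp [mEnd, mS]

lemma mS_filter (n : ℕ) (S : Finset ℕ) (hS : S ⊆ Finset.range n) :
    ((Finset.range n).filter (fun i => mS S i = true)) = S := by
  ext i
  simp only [Finset.mem_filter, mS, decide_eq_true_eq, Finset.mem_range]
  exact ⟨fun h => h.2, fun h => ⟨Finset.mem_range.mp (hS h), h⟩⟩

/-- The core signed telescoping identity. -/
lemma betaCore (G : ℕ → ℤ → ℤ) (aa bb : ℕ → ℤ) (xx : ℤ) (N : ℕ) :
    ∀ d k, N ≤ k + d →
    ∑ S ∈ (Finset.Ico k N).powerset, ((-1:ℤ)^S.card *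
      ∏ i ∈ Finset.Ico k N,
        (G i (if i ∈ S then bb i else aa i) -
          (if i+1 = N then G i xx else G i (if i+1 ∈ S then bb (i+1) else aa (i+1)))))
    = ∏ i ∈ Finset.Ico k N, (G i (aa i) - G i (bb i)) := by
  intro d
  induction d with
  | zero =>
    intro k hk
    rw [Finset.Ico_eq_empty (by omega)]
    simp
  | succ d IH =>
    intro k hk
    by_cases h : N ≤ k
    · rw [Finset.Ico_eq_empty (by omega)]
      simp
    · push_neg at h
      have hIns : Finset.Ico k N = insert k (Finset.Ico (k+1) N) := by
        ext i; simp [Finset.mem_Ico, Finset.mem_insert]; omega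
      have hk' : k ∉ Finset.Ico (k+1) N := by simp
      rw [hIns, Finset.sum_powerset_insert hk', Finset.prod_insert hk',
        ← Finset.sum_add_distrib]
      have key : ∀ S ∈ (Finset.Ico (k+1) N).powerset,
          ((-1:ℤ)^S.card *
            ∏ i ∈ insert k (Finset.Ico (k+1) N),
              (G i (if i ∈ S then bb i else aa i) -
                (if i+1 = N then G i xx else G i (if i+1 ∈ S then bb (i+1) else aa (i+1)))))
          + ((-1:ℤ)^(insert k S).card *
            ∏ i ∈ insert k (Finset.Ico (k+1) N),
              (G i (if i ∈ insert k S then bb i else aa i) -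
                (if i+1 = N then G i xx else G i (if i+1 ∈ insert k S then bb (i+1) else aa (i+1)))))
          = (G k (aa k) - G k (bb k)) *
            ((-1:ℤ)^S.card *
              ∏ i ∈ Finset.Ico (k+1) N,
                (G i (if i ∈ S then bb i else aa i) -
                  (if i+1 = N then G i xx else G i (if i+1 ∈ S then bb (i+1) else aa (i+1))))) := by
        intro S hS
        have hkS : k ∉ S := fun hx => by
          have := Finset.mem_powerset.mp hS hx; simp at this
        have hcard : (insert k S).card = S.card + 1 := Finset.card_insert_of_notMem hkS
        have hprod : ∀ i ∈ Finset.Ico (k+1) N,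
            (G i (if i ∈ insert k S then bb i else aa i) -
              (if i+1 = N then G i xx else G i (if i+1 ∈ insert k S then bb (i+1) else aa (i+1))))
            = (G i (if i ∈ S then bb i else aa i) -
              (if i+1 = N then G i xx else G i (if i+1 ∈ S then bb (i+1) else aa (i+1)))) := by
          intro i hi
          have h1 : i ∈ Finset.Ico (k+1) N := hi
          have hik : i ≠ k := by simp [Finset.mem_Ico] at h1; omega
          have hik1 : i + 1 ≠ k := by simp [Finset.mem_Ico] at h1; omega
          simp [Finset.mem_insert, hik, hik1]
        rw [Finset.prod_insert hk', Finset.prod_insert hk',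
          Finset.prod_congr rfl hprod, hcard]
        have e1 : (if k ∈ S then bb k else aa k) = aa k := by simp [hkS]
        have e2 : (if k ∈ insert k S then bb k else aa k) = bb k := by simp
        have e3 : (if k+1 ∈ insert k S then bb (k+1) else aa (k+1))
            = (if k+1 ∈ S then bb (k+1) else aa (k+1)) := by
          have : k + 1 ≠ k := by omega
          simp [Finset.mem_insert, this]
        rw [e1, e2, e3]
        ring
      rw [Finset.sum_congr rfl key, ← Finset.mul_sum, IH (k+1) (by omega)]

end BetaAux
namespace BetaAux

variable (n : ℕ) (a b : ℕ → ℤ) (x : ℤ) (v : ℕ → ℤ)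

/-- The indexing sets on the right-hand side contributing a tuple `v`, with sign `s`. -/
def cset (s : ℤ) : Finset (Finset ℕ) :=
  (Finset.range n).powerset.filter
    (fun S => (∀ i < n, between (mEnd a b (mS S) i) (mUp n a b x (mS S) i) (v i)) ∧
      RSgn n a b x (mS S, v) = s)

open Classical in
lemma stepA (hv : ∀ i, n ≤ i → v i = 0) :
    ((if LMem n a b v ∧ LSgn n a b v = 1 then (1:ℤ) else 0) -
      (if LMem n a b v ∧ LSgn n a b v = -1 then (1:ℤ) else 0))
    = ∏ i ∈ Finset.range n, bInd (a i) (b i) (v i) := by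
  classical
  by_cases hB : ∀ i < n, between (a i) (b i) (v i)
  · have hprod : ∏ i ∈ Finset.range n, bInd (a i) (b i) (v i) = LSgn n a b v := by
      refine Finset.prod_congr rfl (fun i hi => ?_)
      rw [bInd, if_pos (hB i (Finset.mem_range.mp hi))]
    have hL : LSgn n a b v = ∏ i ∈ Finset.range n, isign (a i) (b i) (v i) := rfl
    rcases prod_isign_cases (Finset.range n) a b v with h1 | h1
    · have hs1 : LSgn n a b v = 1 := by rw [hL, h1]
      rw [hprod, if_pos ⟨⟨hB, hv⟩, hs1⟩, if_neg (fun h => by have := h.2; omega), hs1]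
      norm_num
    · have hs1 : LSgn n a b v = -1 := by rw [hL, h1]
      rw [hprod, if_neg (fun h => by have := h.2; omega), if_pos ⟨⟨hB, hv⟩, hs1⟩, hs1]
      norm_num
  · push_neg at hB
    obtain ⟨i, hi, hbi⟩ := hB
    rw [if_neg (fun h => hbi (h.1.1 i hi)), if_neg (fun h => hbi (h.1.1 i hi)),
      Finset.prod_eq_zero (Finset.mem_range.mpr hi)
        (show bInd (a i) (b i) (v i) = 0 by rw [bInd, if_neg hbi])]
    norm_num

lemma stepBS (S : Finset ℕ) (hS : S ⊆ Finset.range n) :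
    ((if (∀ i < n, between (mEnd a b (mS S) i) (mUp n a b x (mS S) i) (v i)) ∧
        RSgn n a b x (mS S, v) = 1 then (1:ℤ) else 0) -
      (if (∀ i < n, between (mEnd a b (mS S) i) (mUp n a b x (mS S) i) (v i)) ∧
        RSgn n a b x (mS S, v) = -1 then (1:ℤ) else 0))
    = (-1:ℤ)^S.card *
        ∏ i ∈ Finset.range n, bInd (mEnd a b (mS S) i) (mUp n a b x (mS S) i) (v i) := by
  classical
  by_cases hB : ∀ i < n, between (mEnd a b (mS S) i) (mUp n a b x (mS S) i) (v i)
  · have hprod : ∏ i ∈ Finset.range n, bInd (mEnd a b (mS S) i) (mUp n a b x (mS S) i) (v i)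
        = ∏ i ∈ Finset.range n, isign (mEnd a b (mS S) i) (mUp n a b x (mS S) i) (v i) := by
      refine Finset.prod_congr rfl (fun i hi => ?_)
      rw [bInd, if_pos (hB i (Finset.mem_range.mp hi))]
    have hR : RSgn n a b x (mS S, v)
        = (-1:ℤ)^S.card *
          ∏ i ∈ Finset.range n, isign (mEnd a b (mS S) i) (mUp n a b x (mS S) i) (v i) := by
      rw [RSgn, mS_filter n S hS]
    have hcases : RSgn n a b x (mS S, v) = 1 ∨ RSgn n a b x (mS S, v) = -1 := by
      rw [hR]
      rcases neg_one_pow_cases S.card with h1 | h1 <;>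
        rcases prod_isign_cases (Finset.range n) (mEnd a b (mS S)) (mUp n a b x (mS S)) v
          with h2 | h2 <;> rw [h1, h2] <;> norm_num
    rw [hprod, ← hR]
    rcases hcases with h1 | h1
    · rw [if_pos ⟨hB, h1⟩, if_neg (fun h => by have := h.2; omega), h1]; norm_num
    · rw [if_neg (fun h => by have := h.2; omega), if_pos ⟨hB, h1⟩, h1]; norm_num
  · push_neg at hB
    obtain ⟨i, hi, hbi⟩ := hB
    rw [if_neg (fun h => hbi (h.1 i hi)), if_neg (fun h => hbi (h.1 i hi)),
      Finset.prod_eq_zero (Finset.mem_range.mpr hi)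
        (show bInd (mEnd a b (mS S) i) (mUp n a b x (mS S) i) (v i) = 0
          by rw [bInd, if_neg hbi])]
    norm_num

lemma stepB :
    (((cset n a b x v 1).card : ℤ) - ((cset n a b x v (-1)).card : ℤ))
    = ∑ S ∈ (Finset.range n).powerset, ((-1:ℤ)^S.card *
        ∏ i ∈ Finset.range n, bInd (mEnd a b (mS S) i) (mUp n a b x (mS S) i) (v i)) := by
  classical
  have hc : ∀ s : ℤ, ((cset n a b x v s).card : ℤ)
      = ∑ S ∈ (Finset.range n).powerset,
          (if (∀ i < n, between (mEnd a b (mS S) i) (mUp n a b x (mS S) i) (v i)) ∧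
            RSgn n a b x (mS S, v) = s then (1:ℤ) else 0) := by
    intro s
    rw [cset, Finset.card_filter]
    push_cast
    refine Finset.sum_congr rfl (fun S _ => ?_)
    split_ifs <;> norm_num
  rw [hc 1, hc (-1), ← Finset.sum_sub_distrib]
  exact Finset.sum_congr rfl
    (fun S hS => stepBS n a b x v S (Finset.mem_powerset.mp hS))

lemma stepC :
    ∑ S ∈ (Finset.range n).powerset, ((-1:ℤ)^S.card *
        ∏ i ∈ Finset.range n, bInd (mEnd a b (mS S) i) (mUp n a b x (mS S) i) (v i))
    = ∏ i ∈ Finset.range n, bInd (a i) (b i) (v i) := by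
  classical
  set G : ℕ → ℤ → ℤ := fun i y => if y ≤ v i then (1:ℤ) else 0 with hG
  have hterm : ∀ S : Finset ℕ, ∀ i,
      bInd (mEnd a b (mS S) i) (mUp n a b x (mS S) i) (v i)
      = (G i (if i ∈ S then b i else a i) -
          (if i+1 = n then G i x else G i (if i+1 ∈ S then b (i+1) else a (i+1)))) := by
    intro S i
    rw [mS_end, mUp, mS_end, bInd_eq]
    simp only [hG]
    by_cases h : i + 1 = n <;> simp [h]
  have hrhs : ∀ i, bInd (a i) (b i) (v i) = G i (a i) - G i (b i) := fun i => bInd_eq _ _ _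
  calc ∑ S ∈ (Finset.range n).powerset, ((-1:ℤ)^S.card *
        ∏ i ∈ Finset.range n, bInd (mEnd a b (mS S) i) (mUp n a b x (mS S) i) (v i))
      = ∑ S ∈ (Finset.Ico 0 n).powerset, ((-1:ℤ)^S.card *
          ∏ i ∈ Finset.Ico 0 n,
            (G i (if i ∈ S then b i else a i) -
              (if i+1 = n then G i x else G i (if i+1 ∈ S then b (i+1) else a (i+1))))) := by
        rw [← Finset.range_eq_Ico]
        exact Finset.sum_congr rfl (fun S _ => by
          rw [Finset.prod_congr rfl (fun i _ => hterm S i)])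
    _ = ∏ i ∈ Finset.Ico 0 n, (G i (a i) - G i (b i)) := betaCore G a b x n n 0 (by omega)
    _ = ∏ i ∈ Finset.range n, bInd (a i) (b i) (v i) := by
        rw [← Finset.range_eq_Ico]
        exact (Finset.prod_congr rfl (fun i _ => (hrhs i).symm))

end BetaAux
namespace BetaAux

instance pliftSub (P : Prop) : Subsingleton (PLift P) := ⟨fun ⟨_⟩ ⟨_⟩ => rfl⟩

noncomputable def pliftFintype (P : Prop) : Fintype (PLift P) := by
  classical
  by_cases h : P
  · exact Fintype.ofSubsingleton ⟨h⟩
  · haveI : IsEmpty (PLift P) := ⟨fun z => h z.down⟩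
    exact Fintype.ofIsEmpty

lemma pliftCard_pos (P : Prop) (inst : Fintype (PLift P)) (h : P) :
    @Fintype.card _ inst = 1 :=
  (@Fintype.card_eq_one_iff _ inst).mpr ⟨⟨h⟩, fun _ => Subsingleton.elim _ _⟩

lemma pliftCard_neg (P : Prop) (inst : Fintype (PLift P)) (h : ¬P) :
    @Fintype.card _ inst = 0 :=
  (@Fintype.card_eq_zero_iff _ inst).mpr ⟨fun z => h z.down⟩

def FL (n : ℕ) (a b : ℕ → ℤ) (v : ℕ → ℤ) (s : ℤ) : Type :=
  {f : ℕ → ℤ // (LMem n a b f ∧ LSgn n a b f = s) ∧ f = v}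

def FR (n : ℕ) (a b : ℕ → ℤ) (x : ℤ) (v : ℕ → ℤ) (s : ℤ) : Type :=
  {p : (ℕ → Bool) × (ℕ → ℤ) // (RMem n a b x p ∧ RSgn n a b x p = s) ∧ p.2 = v}

variable (n : ℕ) (a b : ℕ → ℤ) (x : ℤ) (v : ℕ → ℤ)

def eqL (s : ℤ) : FL n a b v s ≃ PLift (LMem n a b v ∧ LSgn n a b v = s) where
  toFun z := ⟨by rw [← z.2.2]; exact z.2.1⟩
  invFun h := ⟨v, h.down, rfl⟩
  left_inv := by rintro ⟨f, hf, rfl⟩; rfl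
  right_inv h := Subsingleton.elim _ _

lemma mS_of (m : ℕ → Bool) (hm : ∀ i, n ≤ i → m i = false) :
    mS ((Finset.range n).filter (fun i => m i = true)) = m := by
  funext i
  by_cases hi : i < n
  · cases h : m i <;> simp [mS, Finset.mem_filter, Finset.mem_range, hi, h]
  · simp [mS, Finset.mem_filter, Finset.mem_range, hi, hm i (by omega)]

noncomputable def eqR (hv : ∀ i, n ≤ i → v i = 0) (s : ℤ) :
    FR n a b x v s ≃ {S // S ∈ cset n a b x v s} := by
  refine ⟨fun z => ⟨(Finset.range n).filter (fun i => z.1.1 i = true), ?_⟩,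
    fun w => ⟨(mS w.1, v), ?_⟩, ?_, ?_⟩
  · obtain ⟨⟨m, w⟩, ⟨hRM, hRS⟩, hw⟩ := z
    have hw' : w = v := hw
    subst hw'
    have hm := mS_of n m hRM.2.2
    rw [cset, Finset.mem_filter, Finset.mem_powerset]
    exact ⟨Finset.filter_subset _ _, by rw [hm]; exact ⟨hRM.1, hRS⟩⟩
  · obtain ⟨S, hS⟩ := w
    rw [cset, Finset.mem_filter, Finset.mem_powerset] at hS
    obtain ⟨hsub, hB, hsgn⟩ := hS
    refine ⟨⟨⟨hB, fun i hi => hv i hi, fun i hi => ?_⟩, hsgn⟩, rfl⟩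
    have : i ∉ S := fun hiS => by
      have := Finset.mem_range.mp (hsub hiS); omega
    simp [mS, this]
  · rintro ⟨⟨m, w⟩, ⟨hRM, hRS⟩, hw⟩
    apply Subtype.ext
    have hw' : w = v := hw
    dsimp
    rw [mS_of n m hRM.2.2, hw']
  · rintro ⟨S, hS⟩
    apply Subtype.ext
    dsimp
    have hsub : S ⊆ Finset.range n := by
      rw [cset, Finset.mem_filter, Finset.mem_powerset] at hS
      exact hS.1
    exact mS_filter n S hsub

lemma key : Nonempty ((FL n a b v 1 ⊕ FR n a b x v (-1)) ≃
    (FL n a b v (-1) ⊕ FR n a b x v 1)) := by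
  classical
  by_cases hv : ∀ i, n ≤ i → v i = 0
  · letI iP1 : Fintype (PLift (LMem n a b v ∧ LSgn n a b v = 1)) := pliftFintype _
    letI iP2 : Fintype (PLift (LMem n a b v ∧ LSgn n a b v = -1)) := pliftFintype _
    letI iL1 : Fintype (FL n a b v 1) := Fintype.ofEquiv _ (eqL n a b v 1).symm
    letI iL2 : Fintype (FL n a b v (-1)) := Fintype.ofEquiv _ (eqL n a b v (-1)).symm
    letI iR1 : Fintype (FR n a b x v 1) := Fintype.ofEquiv _ (eqR n a b x v hv 1).symm
    letI iR2 : Fintype (FR n a b x v (-1)) := Fintype.ofEquiv _ (eqR n a b x v hv (-1)).symm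
    refine ⟨Fintype.equivOfCardEq ?_⟩
    rw [Fintype.card_sum, Fintype.card_sum]
    have hL1 : Fintype.card (FL n a b v 1)
        = if LMem n a b v ∧ LSgn n a b v = 1 then 1 else 0 := by
      rw [Fintype.card_congr (eqL n a b v 1)]
      by_cases h : LMem n a b v ∧ LSgn n a b v = 1
      · rw [if_pos h, pliftCard_pos _ _ h]
      · rw [if_neg h, pliftCard_neg _ _ h]
    have hL2 : Fintype.card (FL n a b v (-1))
        = if LMem n a b v ∧ LSgn n a b v = -1 then 1 else 0 := by
      rw [Fintype.card_congr (eqL n a b v (-1))]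
      by_cases h : LMem n a b v ∧ LSgn n a b v = -1
      · rw [if_pos h, pliftCard_pos _ _ h]
      · rw [if_neg h, pliftCard_neg _ _ h]
    have hR1 : Fintype.card (FR n a b x v 1) = (cset n a b x v 1).card := by
      rw [Fintype.card_congr (eqR n a b x v hv 1), Fintype.card_coe]
    have hR2 : Fintype.card (FR n a b x v (-1)) = (cset n a b x v (-1)).card := by
      rw [Fintype.card_congr (eqR n a b x v hv (-1)), Fintype.card_coe]
    rw [hL1, hL2, hR1, hR2]
    have A := stepA n a b v hv
    have B := stepB n a b x v
    rw [stepC n a b x v] at B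
    by_cases h1 : LMem n a b v ∧ LSgn n a b v = 1 <;>
      by_cases h2 : LMem n a b v ∧ LSgn n a b v = -1
    · rw [if_pos h1, if_pos h2] at A ⊢
      have hZZ : ((cset n a b x v 1).card : ℤ) = ((cset n a b x v (-1)).card : ℤ) := by
        linarith [A, B]
      omega
    · rw [if_pos h1, if_neg h2] at A ⊢
      have hZZ : ((cset n a b x v 1).card : ℤ)
          = ((cset n a b x v (-1)).card : ℤ) + 1 := by linarith [A, B]
      omega
    · rw [if_neg h1, if_pos h2] at A ⊢
      have hZZ : ((cset n a b x v 1).card : ℤ) + 1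
          = ((cset n a b x v (-1)).card : ℤ) := by linarith [A, B]
      omega
    · rw [if_neg h1, if_neg h2] at A ⊢
      have hZZ : ((cset n a b x v 1).card : ℤ)
          = ((cset n a b x v (-1)).card : ℤ) := by linarith [A, B]
      omega
  · haveI e1 : IsEmpty (FL n a b v 1) :=
      ⟨fun z => hv (fun i hi => by rw [← z.2.2]; exact z.2.1.1.2 i hi)⟩
    haveI e2 : IsEmpty (FL n a b v (-1)) :=
      ⟨fun z => hv (fun i hi => by rw [← z.2.2]; exact z.2.1.1.2 i hi)⟩
    haveI e3 : IsEmpty (FR n a b x v 1) :=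
      ⟨fun z => hv (fun i hi => by rw [← z.2.2]; exact z.2.1.1.2.1 i hi)⟩
    haveI e4 : IsEmpty (FR n a b x v (-1)) :=
      ⟨fun z => hv (fun i hi => by rw [← z.2.2]; exact z.2.1.1.2.1 i hi)⟩
    exact ⟨Equiv.equivOfIsEmpty _ _⟩

end BetaAux

/-- Fischer–Konvalinka's sijection `β` from `[a₁,b₁) × ⋯ × [aₙ,bₙ)` to
`⨆_{m ∈ S₁×⋯×Sₙ} [m₁,m₂) × ⋯ × [mₙ₋₁,mₙ) × [mₙ,x)`, where `Sᵢ = ({aᵢ},{bᵢ})`; it is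
compatible with the normal statistic recording the underlying integer tuple. -/
theorem beta_sijection (n : ℕ) (a b : ℕ → ℤ) (x : ℤ) :
    ∃ e : ({f : ℕ → ℤ // LMem n a b f ∧ LSgn n a b f = 1} ⊕
           {p : (ℕ → Bool) × (ℕ → ℤ) // RMem n a b x p ∧ RSgn n a b x p = -1}) ≃
          ({f : ℕ → ℤ // LMem n a b f ∧ LSgn n a b f = -1} ⊕
           {p : (ℕ → Bool) × (ℕ → ℤ) // RMem n a b x p ∧ RSgn n a b x p = 1}),
      ∀ z, Sum.elim Subtype.val (fun u => u.val.2) (e z)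
           = Sum.elim Subtype.val (fun u => u.val.2) z := by
  classical
  let g₁ : ({f : ℕ → ℤ // LMem n a b f ∧ LSgn n a b f = 1} ⊕
      {p : (ℕ → Bool) × (ℕ → ℤ) // RMem n a b x p ∧ RSgn n a b x p = -1}) → (ℕ → ℤ) :=
    Sum.elim Subtype.val (fun u => u.val.2)
  let g₂ : ({f : ℕ → ℤ // LMem n a b f ∧ LSgn n a b f = -1} ⊕
      {p : (ℕ → Bool) × (ℕ → ℤ) // RMem n a b x p ∧ RSgn n a b x p = 1}) → (ℕ → ℤ) :=
    Sum.elim Subtype.val (fun u => u.val.2)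
  let d₁ : ∀ v, {z // g₁ z = v} ≃ (BetaAux.FL n a b v 1 ⊕ BetaAux.FR n a b x v (-1)) :=
    fun v =>
    { toFun := fun z => match z with
        | ⟨Sum.inl w, h⟩ => Sum.inl ⟨w.1, w.2, h⟩
        | ⟨Sum.inr w, h⟩ => Sum.inr ⟨w.1, w.2, h⟩
      invFun := Sum.elim (fun w => ⟨Sum.inl ⟨w.1, w.2.1⟩, w.2.2⟩)
        (fun w => ⟨Sum.inr ⟨w.1, w.2.1⟩, w.2.2⟩)
      left_inv := by rintro ⟨z | z, h⟩ <;> rfl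
      right_inv := by rintro (w | w) <;> rfl }
  let d₂ : ∀ v, {z // g₂ z = v} ≃ (BetaAux.FL n a b v (-1) ⊕ BetaAux.FR n a b x v 1) :=
    fun v =>
    { toFun := fun z => match z with
        | ⟨Sum.inl w, h⟩ => Sum.inl ⟨w.1, w.2, h⟩
        | ⟨Sum.inr w, h⟩ => Sum.inr ⟨w.1, w.2, h⟩
      invFun := Sum.elim (fun w => ⟨Sum.inl ⟨w.1, w.2.1⟩, w.2.2⟩)
        (fun w => ⟨Sum.inr ⟨w.1, w.2.1⟩, w.2.2⟩)
      left_inv := by rintro ⟨z | z, h⟩ <;> rfl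
      right_inv := by rintro (w | w) <;> rfl }
  let F : ∀ v, {z // g₁ z = v} ≃ {z // g₂ z = v} := fun v =>
    (d₁ v).trans ((Classical.choice (BetaAux.key n a b x v)).trans (d₂ v).symm)
  refine ⟨(Equiv.sigmaFiberEquiv g₁).symm.trans
    ((Equiv.sigmaCongrRight F).trans (Equiv.sigmaFiberEquiv g₂)), fun z => ?_⟩
  exact ((F (g₁ z)) ⟨z, rfl⟩).2
end

section
/- For each k ∈ ℤⁿ and x ∈ ℤ, there is a sijection τ from GT(k₁,…,kₙ) to the disjoint union over i = 1,…,n of GT(k₁,…,k_{i−1},x,k_{i+1},…,kₙ), and τ is compatible with the statistics η_{row,1},…,η_{row,n−1} recording the multisets of entries of the top n−1 rows. -/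
/-- `t` is a (generalized) Gelfand–Tsetlin pattern with `n` rows and bottom row `k`:
row `i` (`0 ≤ i ≤ n−1`) has entries `t i 0, …, t i i`, the bottom row (`i = n−1`) is
`k`, and each entry lies in the signed half-open interval determined by its two lower
neighbours (this is the recursion `GT(k₁,…,kₙ) = ⨆_{l ∈ [k₁,k₂)×⋯×[kₙ₋₁,kₙ)} GT(l)`).
Entries outside the triangle are normalised to `0`. -/
def IsGT (n : ℕ) (k : ℕ → ℤ) (t : ℕ → ℕ → ℤ) : Prop :=
  (∀ j < n, t (n - 1) j = k j) ∧
  (∀ i j, i + 1 < n → j ≤ i → between (t (i+1) j) (t (i+1) (j+1)) (t i j)) ∧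
  (∀ i j, n - 1 < i ∨ i < j → t i j = 0)

/-- The sign of a generalized Gelfand–Tsetlin pattern: the product of the signs of all
its entries in their respective signed intervals. -/
def gtSign (n : ℕ) (t : ℕ → ℕ → ℤ) : ℤ :=
  ∏ i ∈ Finset.range (n - 1), ∏ j ∈ Finset.range (i + 1),
    isign (t (i+1) j) (t (i+1) (j+1)) (t i j)

/-- The positive part of the signed set `GT(k)`. -/
def GTp (n : ℕ) (k : ℕ → ℤ) := {t : ℕ → ℕ → ℤ // IsGT n k t ∧ gtSign n t = 1}

/-- The negative part of the signed set `GT(k)`. -/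
def GTm (n : ℕ) (k : ℕ → ℤ) := {t : ℕ → ℕ → ℤ // IsGT n k t ∧ gtSign n t = -1}

/-- The multiset of entries of the `i`-th row of a pattern. -/
def rowMS (t : ℕ → ℕ → ℤ) (i : ℕ) : Multiset ℤ :=
  (List.ofFn (fun j : Fin (i + 1) => t i j.1) : Multiset ℤ)

/-- `k` with the entry at position `i` replaced by `x`. -/
def rep (k : ℕ → ℤ) (i : ℕ) (x : ℤ) : ℕ → ℤ := fun j => if j = i then x else k j

/-!
Only the existence of `τ` is claimed, so it suffices to compare fibres of the statistic: for every
value `c` of the row multisets, the signed number of patterns of `GT(k)` with statistic `c` must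
equal the sum over `i` of the signed numbers for `GT(k₁,…,kᵢ₋₁,x,kᵢ₊₁,…,kₙ)`; bijections between
the finite fibres then assemble to `τ`.

Peeling off the bottom row, the signed count for `k` is `∑_l ∏_j χ_{[k_j, k_{j+1})}(l_j) · F(l)`,
where `F(l)` is the signed count for `l` with the remaining statistic, or `0` if the multiset of `l`
is wrong. Since the statistic is made of multisets, induction shows that `F` changes sign under
adjacent transpositions of `l`, so a weight that is symmetric in two adjacent coordinates
contributes nothing. Now write `χ_{[k_j, k_{j+1})} = χ_{[k_j, x)} + χ_{[x, k_{j+1})}` and expand: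
the words with `χ_{[k_{i-1}, x)}` at `i - 1` and `χ_{[x, k_{i+1})}` at `i` sum to the weight of
`k` with `x` in position `i`, and what is left over has factors `χ_{[x, k_{p+1})} χ_{[k_{p+1}, x)}`
at two adjacent positions, a symmetric weight.
-/

open Finset

theorem exists_equiv_comp_eq_of_card_fiber {X Y γ : Type*} [Finite X] [Finite Y] (f : X → γ)
    (g : Y → γ) (h : ∀ c, Nat.card {x // f x = c} = Nat.card {y // g y = c}) :
    ∃ e : X ≃ Y, ∀ x, g (e x) = f x :=
  ⟨Equiv.ofFiberEquiv fun c => (Finite.card_eq.1 (h c)).some, Equiv.ofFiberEquiv_map _⟩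

theorem Nat.card_fiber_sum_elim {X Y γ : Type*} [Finite X] [Finite Y] (f : X → γ) (g : Y → γ)
    (c : γ) :
    Nat.card {z // Sum.elim f g z = c} = Nat.card {x // f x = c} + Nat.card {y // g y = c} := by
  rw [Nat.card_congr Equiv.subtypeSum, Nat.card_sum]
  rfl

namespace GTPattern

open scoped Classical

noncomputable section

/-- The signed indicator of the signed interval `[p, q)`. -/
def chi (p q y : ℤ) : ℤ := (if p ≤ y then 1 else 0) - (if q ≤ y then 1 else 0)

lemma chi_add (a b c y : ℤ) : chi a b y + chi b c y = chi a c y := by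
  simp only [chi]; ring

lemma chi_comm (a b y : ℤ) : chi b a y = -chi a b y := by
  simp only [chi]; ring

lemma chi_of_between {a b y : ℤ} (h : between a b y) : chi a b y = isign a b y := by
  rcases h with ⟨h1, h2⟩ | ⟨h1, h2⟩ <;> simp only [chi, isign] <;> split_ifs <;> omega

lemma chi_of_not_between {a b y : ℤ} (h : ¬between a b y) : chi a b y = 0 := by
  unfold between at h; unfold chi
  split_ifs <;> omega

lemma abs_le_of_between {a b y : ℤ} (h : between a b y) : |y| ≤ |a| + |b| := by
  rw [abs_le]
  rcases h with ⟨h1, h2⟩ | ⟨h1, h2⟩ <;> constructor <;>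
    linarith [le_abs_self a, le_abs_self b, neg_abs_le a, neg_abs_le b]

def funsOn (m : ℕ) (S : Finset ℤ) : Finset (ℕ → ℤ) :=
  (Fintype.piFinset fun _ : Fin m => S).image fun f j => if h : j < m then f ⟨j, h⟩ else 0

lemma mem_funsOn {m : ℕ} {S : Finset ℤ} {l : ℕ → ℤ} :
    l ∈ funsOn m S ↔ (∀ j < m, l j ∈ S) ∧ ∀ j, m ≤ j → l j = 0 := by
  constructor
  · simp only [funsOn, mem_image, Fintype.mem_piFinset]
    rintro ⟨f, hf, rfl⟩
    exact ⟨fun j hj => by simp [hj, hf], fun j hj => by simp [Nat.not_lt.2 hj]⟩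
  · rintro ⟨hS, h0⟩
    simp only [funsOn, mem_image, Fintype.mem_piFinset]
    refine ⟨fun j => l j, fun j => hS _ j.2, funext fun j => ?_⟩
    by_cases hj : j < m
    · simp [hj]
    · simp [hj, h0 j (Nat.le_of_not_lt hj)]

lemma funsOn_mono {m : ℕ} {S S' : Finset ℤ} (h : S ⊆ S') : funsOn m S ⊆ funsOn m S' := by
  intro l hl
  rw [mem_funsOn] at hl ⊢
  exact ⟨fun j hj => h (hl.1 j hj), hl.2⟩

lemma swap_succ_lt {p m j : ℕ} (hp : p + 1 < m) (hj : j < m) : Equiv.swap p (p + 1) j < m := by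
  rw [Equiv.swap_apply_def]
  split_ifs <;> omega

lemma comp_swap_mem_funsOn {p m : ℕ} {S : Finset ℤ} {l : ℕ → ℤ} (hp : p + 1 < m)
    (hl : l ∈ funsOn m S) : l ∘ Equiv.swap p (p + 1) ∈ funsOn m S := by
  rw [mem_funsOn] at hl ⊢
  refine ⟨fun j hj => hl.1 _ (swap_succ_lt hp hj), fun j hj => ?_⟩
  rw [Function.comp_apply, Equiv.swap_apply_of_ne_of_ne (by omega) (by omega)]
  exact hl.2 j hj

lemma sum_funsOn_eq_zero_of_antisymm {m p : ℕ} (hp : p + 1 < m) (S : Finset ℤ)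
    (g : (ℕ → ℤ) → ℤ) (hg : ∀ l, g (l ∘ Equiv.swap p (p + 1)) = -g l) :
    ∑ l ∈ funsOn m S, g l = 0 := by
  refine sum_involution (fun l _ => l ∘ Equiv.swap p (p + 1)) (fun l _ => by rw [hg]; ring)
    (fun l _ hne hfix => hne ?_) (fun l hl => comp_swap_mem_funsOn hp hl)
    (fun l _ => by ext j; simp)
  have := hg l
  rw [hfix] at this
  omega

def initMS (m : ℕ) (l : ℕ → ℤ) : Multiset ℤ := (range m).val.map l

lemma initMS_comp_swap {m p : ℕ} (hp : p + 1 < m) (l : ℕ → ℤ) :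
    initMS m (l ∘ Equiv.swap p (p + 1)) = initMS m l := by
  have hσ : (range m).map (Equiv.swap p (p + 1)).toEmbedding = range m :=
    map_perm fun j hj => mem_range.2 (by
      rw [Set.mem_ofPred_eq, Equiv.swap_apply_ne_self_iff] at hj
      omega)
  have hval : (range m).val.map (Equiv.swap p (p + 1)) = (range m).val := by
    simpa using congrArg Finset.val hσ
  rw [initMS, ← Multiset.map_map, hval, initMS]

lemma rowMS_eq_initMS (t : ℕ → ℕ → ℤ) (i : ℕ) : rowMS t i = initMS (i + 1) (t i) := by
  rw [rowMS, initMS, range_val, ← Multiset.coe_range, Multiset.map_coe, List.ofFn_eq_map]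
  congr 1
  exact List.ext_getElem (by simp) (by simp)

def weight (e : ℕ → ℤ × ℤ) (m : ℕ) (l : ℕ → ℤ) : ℤ := ∏ j ∈ range m, chi (e j).1 (e j).2 (l j)

def adjPairs (k : ℕ → ℤ) (j : ℕ) : ℤ × ℤ := (k j, k (j + 1))

lemma weight_comp_swap {e : ℕ → ℤ × ℤ} {m p : ℕ} (hp : p + 1 < m)
    (he : e (p + 1) = e p ∨ e (p + 1) = (e p).swap) (l : ℕ → ℤ) :
    weight e m (l ∘ Equiv.swap p (p + 1)) = weight e m l := by
  have hT : {p, p + 1} ⊆ range m := by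
    simp only [insert_subset_iff, singleton_subset_iff, mem_range]; omega
  rw [weight, weight, ← prod_sdiff hT, ← prod_sdiff hT (f := fun j => chi _ _ (l j))]
  congr 1
  · refine prod_congr rfl fun j hj => ?_
    simp only [mem_sdiff, mem_insert, mem_singleton, not_or] at hj
    rw [Function.comp_apply, Equiv.swap_apply_of_ne_of_ne hj.2.1 hj.2.2]
  · rw [prod_pair (by omega), prod_pair (by omega)]
    rcases he with he | he <;>
      simp only [he, Prod.fst_swap, Prod.snd_swap, chi_comm (e p).1, Function.comp_apply,
        Equiv.swap_apply_left, Equiv.swap_apply_right] <;> ring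

lemma weight_eq_mul_of_eqOn {e e₀ : ℕ → ℤ × ℤ} {m : ℕ} {T : Finset ℕ} (hT : T ⊆ range m)
    (h : ∀ j < m, j ∉ T → e j = e₀ j) (l : ℕ → ℤ) :
    weight e m l = (∏ j ∈ T, chi (e j).1 (e j).2 (l j)) *
      ∏ j ∈ range m \ T, chi (e₀ j).1 (e₀ j).2 (l j) := by
  rw [weight, ← prod_sdiff hT, mul_comm]
  congr 1
  refine prod_congr rfl fun j hj => ?_
  rw [mem_sdiff, mem_range] at hj
  rw [h j hj.1 hj.2]

def absSum (k : ℕ → ℤ) (n : ℕ) : ℤ := ∑ j ∈ range n, |k j|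

def box (k : ℕ → ℤ) (n : ℕ) : Finset ℤ := Icc (-absSum k n) (absSum k n)

lemma mem_box_of_between {k : ℕ → ℤ} {n j : ℕ} {y : ℤ} (hj : j + 1 < n)
    (h : between (k j) (k (j + 1)) y) : y ∈ box k n := by
  have hpair : |k j| + |k (j + 1)| ≤ absSum k n := by
    rw [← sum_pair (f := fun a => |k a|) (show j ≠ j + 1 by omega)]
    refine sum_le_sum_of_subset_of_nonneg (fun a ha => ?_) fun a _ _ => abs_nonneg (k a)
    simp only [mem_insert, mem_singleton] at ha; simp only [mem_range]; omega
  rw [box, mem_Icc, ← abs_le]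
  exact (abs_le_of_between h).trans hpair

lemma sum_weight_mul_eq_of_box_subset {k : ℕ → ℤ} {m : ℕ} {S : Finset ℤ}
    (hS : box k (m + 2) ⊆ S) (g : (ℕ → ℤ) → ℤ) :
    ∑ l ∈ funsOn (m + 1) (box k (m + 2)), weight (adjPairs k) (m + 1) l * g l
      = ∑ l ∈ funsOn (m + 1) S, weight (adjPairs k) (m + 1) l * g l := by
  refine sum_subset (funsOn_mono hS) fun l hlS hl => ?_
  obtain ⟨j, hj, hjS⟩ : ∃ j < m + 1, l j ∉ box k (m + 2) := by
    by_contra! h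
    exact hl (mem_funsOn.2 ⟨h, (mem_funsOn.1 hlS).2⟩)
  have hchi : chi (k j) (k (j + 1)) (l j) = 0 :=
    chi_of_not_between fun hb => hjS (mem_box_of_between (by omega) hb)
  rw [weight, prod_eq_zero (mem_range.2 hj) hchi, zero_mul]

/-- Defined by peeling off the bottom row `k`; `signedCount_eq_sum_gtSign` identifies it with
the signed number of patterns in `GT(k)` whose rows have the multisets `M`. -/
def signedCount : ℕ → (ℕ → ℤ) → (ℕ → Multiset ℤ) → ℤ
  | 0, _, _ => 0
  | 1, _, M => if M = 0 then 1 else 0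
  | m + 2, k, M => ∑ l ∈ funsOn (m + 1) (box k (m + 2)), weight (adjPairs k) (m + 1) l *
      if M m = initMS (m + 1) l then signedCount (m + 1) l (Function.update M m 0) else 0

def rowTerm (m : ℕ) (M : ℕ → Multiset ℤ) (l : ℕ → ℤ) : ℤ :=
  if M m = initMS (m + 1) l then signedCount (m + 1) l (Function.update M m 0) else 0

lemma signedCount_eq_sum_of_box_subset {k : ℕ → ℤ} {m : ℕ} {S : Finset ℤ}
    (hS : box k (m + 2) ⊆ S) (M : ℕ → Multiset ℤ) :
    signedCount (m + 2) k M
      = ∑ l ∈ funsOn (m + 1) S, weight (adjPairs k) (m + 1) l * rowTerm m M l :=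
  sum_weight_mul_eq_of_box_subset hS _

def SwapAntisymm (n : ℕ) : Prop :=
  ∀ (k : ℕ → ℤ) (i : ℕ) (M : ℕ → Multiset ℤ), i + 1 < n →
    signedCount n (k ∘ Equiv.swap i (i + 1)) M = -signedCount n k M

lemma rowTerm_comp_swap {m p : ℕ} (h : SwapAntisymm (m + 1)) (hp : p + 1 < m + 1)
    (M : ℕ → Multiset ℤ) (l : ℕ → ℤ) :
    rowTerm m M (l ∘ Equiv.swap p (p + 1)) = -rowTerm m M l := by
  simp only [rowTerm, initMS_comp_swap hp, h l p _ hp]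
  split_ifs <;> simp

lemma sum_weight_mul_rowTerm_eq_zero {m p : ℕ} (h : SwapAntisymm (m + 1)) (hp : p + 1 < m + 1)
    {e : ℕ → ℤ × ℤ} (he : e (p + 1) = e p ∨ e (p + 1) = (e p).swap)
    (S : Finset ℤ) (M : ℕ → Multiset ℤ) :
    ∑ l ∈ funsOn (m + 1) S, weight e (m + 1) l * rowTerm m M l = 0 :=
  sum_funsOn_eq_zero_of_antisymm hp S _ fun l => by
    rw [weight_comp_swap hp he, rowTerm_comp_swap h hp]; ring

lemma adjPairs_comp_swap_of_ne {k : ℕ → ℤ} {i j : ℕ} (h₁ : j ≠ i) (h₂ : j ≠ i + 1)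
    (h₃ : j + 1 ≠ i) : adjPairs (k ∘ Equiv.swap i (i + 1)) j = adjPairs k j := by
  simp [adjPairs, Equiv.swap_apply_of_ne_of_ne, *]

lemma weight_swap_add_of_length_one (k l : ℕ → ℤ) :
    weight (adjPairs (k ∘ Equiv.swap 0 1)) 1 l + weight (adjPairs k) 1 l = 0 := by
  simp [weight, adjPairs, chi_comm (k 0)]

/- In the next three lemmas, every weight on the right has equal pairs at two adjacent positions,
so `sum_weight_mul_rowTerm_eq_zero` applies to it. -/
lemma weight_swap_zero_add (k : ℕ → ℤ) {m : ℕ} (hm : 2 ≤ m) (l : ℕ → ℤ) :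
    weight (adjPairs (k ∘ Equiv.swap 0 1)) m l + weight (adjPairs k) m l
      = -weight (Function.update (adjPairs k) 1 (k 0, k 1)) m l := by
  have hT : ({0, 1} : Finset ℕ) ⊆ range m := by
    simp only [insert_subset_iff, singleton_subset_iff, mem_range]; omega
  rw [weight_eq_mul_of_eqOn hT (e₀ := adjPairs k)
      fun j _ hj => by
        simp only [mem_insert, mem_singleton, not_or] at hj
        exact adjPairs_comp_swap_of_ne (by omega) (by omega) (by omega),
    weight_eq_mul_of_eqOn hT (e₀ := adjPairs k) fun _ _ _ => rfl,
    weight_eq_mul_of_eqOn hT (e₀ := adjPairs k)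
      fun j _ hj => Function.update_of_ne (by simp_all) _ _]
  simp only [adjPairs, Function.comp_apply, Equiv.swap_apply_def, Nat.add_eq_zero_iff, one_ne_zero,
    and_false, ↓reduceIte, Nat.add_eq_right, mem_singleton, zero_ne_one, not_false_eq_true,
    prod_insert, prod_singleton, Nat.reduceAdd, zero_add, Function.update_apply]
  rw [chi_comm (k 0) (k 1) (l 0), ← chi_add (k 0) (k 1) (k 2) (l 1)]
  ring

lemma weight_swap_last_add (k : ℕ → ℤ) {m q : ℕ} (hm : m = q + 2) (l : ℕ → ℤ) :
    weight (adjPairs (k ∘ Equiv.swap (q + 1) (q + 1 + 1))) m l + weight (adjPairs k) m l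
      = -weight (Function.update (adjPairs k) q (k (q + 1), k (q + 2))) m l := by
  subst hm
  rw [show q + 1 + 1 = q + 2 from rfl]
  have hT : ({q, q + 1} : Finset ℕ) ⊆ range (q + 2) := by
    simp only [insert_subset_iff, singleton_subset_iff, mem_range]; omega
  rw [weight_eq_mul_of_eqOn hT (e₀ := adjPairs k)
      fun j hj hjT => by
        simp only [mem_insert, mem_singleton, not_or] at hjT
        exact adjPairs_comp_swap_of_ne (by omega) (by omega) (by omega),
    weight_eq_mul_of_eqOn hT (e₀ := adjPairs k) fun _ _ _ => rfl,
    weight_eq_mul_of_eqOn hT (e₀ := adjPairs k)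
      fun j _ hj => Function.update_of_ne (by simp_all) _ _]
  simp only [adjPairs, Function.comp_apply, Equiv.swap_apply_def, Nat.add_right_cancel_iff,
    mem_singleton, Nat.left_eq_add, one_ne_zero, not_false_eq_true, prod_insert, ↓reduceIte,
    OfNat.ofNat_ne_zero, prod_singleton, Nat.add_eq_left, Function.update_apply]
  rw [show q + 1 + 1 = q + 2 from rfl, chi_comm (k (q + 1)) (k (q + 2)) (l (q + 1)),
    ← chi_add (k q) (k (q + 1)) (k (q + 2)) (l q)]
  ring

lemma weight_swap_inner_add (k : ℕ → ℤ) {m q : ℕ} (hq : q + 3 ≤ m) (l : ℕ → ℤ) :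
    weight (adjPairs (k ∘ Equiv.swap (q + 1) (q + 1 + 1))) m l + weight (adjPairs k) m l
      = -weight (Function.update (Function.update (adjPairs k) q (k q, k (q + 2)))
          (q + 2) (k (q + 1), k (q + 2))) m l
        - weight (Function.update (adjPairs k) q (k (q + 1), k (q + 2))) m l := by
  rw [show q + 1 + 1 = q + 2 from rfl]
  have hT : ({q, q + 1, q + 2} : Finset ℕ) ⊆ range m := by
    simp only [insert_subset_iff, singleton_subset_iff, mem_range]; omega
  rw [weight_eq_mul_of_eqOn hT (e₀ := adjPairs k)
      fun j hj hjT => by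
        simp only [mem_insert, mem_singleton, not_or] at hjT
        exact adjPairs_comp_swap_of_ne (by omega) (by omega) (by omega),
    weight_eq_mul_of_eqOn hT (e₀ := adjPairs k) fun _ _ _ => rfl,
    weight_eq_mul_of_eqOn hT (e₀ := adjPairs k) fun j _ hj => by
      simp_all,
    weight_eq_mul_of_eqOn hT (e₀ := adjPairs k)
      fun j _ hj => Function.update_of_ne (by simp_all) _ _]
  simp only [adjPairs, Function.comp_apply, Equiv.swap_apply_def, Nat.add_right_cancel_iff,
    mem_insert, Nat.left_eq_add, one_ne_zero, mem_singleton, OfNat.ofNat_ne_zero, or_self,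
    not_false_eq_true, prod_insert, ↓reduceIte, Nat.add_left_cancel_iff,
    Nat.add_eq_left, prod_singleton, OfNat.ofNat_ne_one, Function.update_apply]
  rw [show q + 1 + 1 = q + 2 from rfl, show q + 2 + 1 = q + 3 from rfl,
    chi_comm (k (q + 1)) (k (q + 2)) (l (q + 1)), ← chi_add (k q) (k (q + 1)) (k (q + 2)) (l q),
    ← chi_add (k (q + 1)) (k (q + 2)) (k (q + 3)) (l (q + 2))]
  ring

lemma sum_weight_swap_add_mul_rowTerm {m i : ℕ} (h : SwapAntisymm (m + 1)) (hi : i + 1 < m + 2)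
    (k : ℕ → ℤ) (S : Finset ℤ) (M : ℕ → Multiset ℤ) :
    ∑ l ∈ funsOn (m + 1) S, (weight (adjPairs (k ∘ Equiv.swap i (i + 1))) (m + 1) l +
      weight (adjPairs k) (m + 1) l) * rowTerm m M l = 0 := by
  rcases Nat.eq_zero_or_pos m with rfl | hm
  · obtain rfl : i = 0 := by omega
    simp [weight_swap_add_of_length_one]
  rcases i with _ | q
  · simp_rw [weight_swap_zero_add k (by omega : 2 ≤ m + 1), neg_mul, sum_neg_distrib, neg_eq_zero]
    exact sum_weight_mul_rowTerm_eq_zero h (p := 0) (by omega) (by simp [adjPairs]) S M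
  rcases (show m = q + 1 ∨ q + 3 ≤ m + 1 by omega) with rfl | hq
  · simp_rw [weight_swap_last_add k rfl, neg_mul, sum_neg_distrib, neg_eq_zero]
    exact sum_weight_mul_rowTerm_eq_zero h (p := q) (by omega) (by simp [adjPairs]) S M
  · simp_rw [weight_swap_inner_add k hq, sub_mul, neg_mul, sum_sub_distrib, sum_neg_distrib]
    rw [sum_weight_mul_rowTerm_eq_zero h (p := q + 1) (by omega) ?_ S M,
      sum_weight_mul_rowTerm_eq_zero h (p := q) (by omega) ?_ S M, neg_zero, sub_zero]
    all_goals simp [adjPairs]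

lemma swapAntisymm : ∀ n, SwapAntisymm n
  | 0 => fun _ _ _ hi => absurd hi (by omega)
  | 1 => fun _ _ _ hi => absurd hi (by omega)
  | m + 2 => fun k i M hi => by
    have hS := subset_union_left (s₁ := box k (m + 2))
      (s₂ := box (k ∘ Equiv.swap i (i + 1)) (m + 2))
    rw [signedCount_eq_sum_of_box_subset hS, signedCount_eq_sum_of_box_subset subset_union_right,
      eq_neg_iff_add_eq_zero, ← sum_add_distrib]
    simp_rw [← add_mul]
    exact sum_weight_swap_add_mul_rowTerm (swapAntisymm (m + 1)) hi k _ M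

/-- Expand `∏ j ∈ range m, (a j + b j)` into words in `a` and `b`. `insProd a b m i` collects the
words with `a` at `i - 1` and `b` at `i`, `crossProd a b m p` those with `b` at `p` and `a` at
`p + 1`. Padded with an `a` in front and a `b` at the end, every word has exactly one more
`ab`-boundary than `ba`-boundaries; this is `sum_insProd`. -/
def insProd (a b : ℕ → ℤ) (m i : ℕ) : ℤ :=
  ∏ j ∈ range m, if j + 1 = i then a j else if j = i then b j else a j + b j

def crossProd (a b : ℕ → ℤ) (m p : ℕ) : ℤ :=
  ∏ j ∈ range m, if j = p then b j else if j = p + 1 then a j else a j + b j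

lemma prod_range_ite_ite_of_not {f g c : ℕ → ℤ} {m : ℕ} {P Q : ℕ → Prop} [DecidablePred P]
    [DecidablePred Q] (h : ∀ j < m, ¬P j ∧ ¬Q j) :
    ∏ j ∈ range m, (if P j then f j else if Q j then g j else c j) = ∏ j ∈ range m, c j :=
  prod_congr rfl fun j hj => by
    rw [if_neg (h j (mem_range.1 hj)).1, if_neg (h j (mem_range.1 hj)).2]

lemma insProd_succ_self (a b : ℕ → ℤ) (m : ℕ) :
    insProd a b (m + 1) (m + 1) = (∏ j ∈ range m, (a j + b j)) * a m := by
  rw [insProd, prod_range_succ, if_pos rfl,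
    prod_range_ite_ite_of_not fun j hj => ⟨by omega, by omega⟩]

lemma crossProd_succ_succ_self (a b : ℕ → ℤ) (m : ℕ) :
    crossProd a b (m + 2) m = (∏ j ∈ range m, (a j + b j)) * b m * a (m + 1) := by
  rw [crossProd, prod_range_succ, prod_range_succ, if_pos rfl, if_neg (by omega), if_pos rfl,
    prod_range_ite_ite_of_not fun j hj => ⟨by omega, by omega⟩]

lemma sum_insProd (a b : ℕ → ℤ) : ∀ m, ∑ i ∈ range (m + 1), insProd a b m i
    = ∏ j ∈ range m, (a j + b j) + ∑ p ∈ range (m - 1), crossProd a b m p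
  | 0 => by simp [insProd]
  | m + 1 => by
    have hins : ∀ i ∈ range m, insProd a b (m + 1) i = insProd a b m i * (a m + b m) :=
      fun i hi => by
        rw [mem_range] at hi
        rw [insProd, prod_range_succ, if_neg (by omega), if_neg (by omega), insProd]
    have hprev : insProd a b (m + 1) m = insProd a b m m * b m := by
      rw [insProd, prod_range_succ, if_neg (by omega), if_pos rfl, insProd]
    have hcross : ∑ p ∈ range (m - 1), crossProd a b (m + 1) p
        = (∑ p ∈ range (m - 1), crossProd a b m p) * (a m + b m) := by
      rw [sum_mul]
      refine sum_congr rfl fun p hp => ?_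
      rw [mem_range] at hp
      rw [crossProd, prod_range_succ, if_neg (by omega), if_neg (by omega), crossProd]
    have hnew : ∑ p ∈ range m, crossProd a b (m + 1) p
        = ∑ p ∈ range (m - 1), crossProd a b (m + 1) p
        + ((∏ j ∈ range m, (a j + b j)) - insProd a b m m) * a m := by
      rcases m with _ | q
      · simp [insProd]
      · rw [sum_range_succ, Nat.add_sub_cancel, crossProd_succ_succ_self, insProd_succ_self,
          prod_range_succ]
        ring
    have ih := sum_insProd a b m
    rw [sum_range_succ] at ih
    rw [sum_range_succ, sum_range_succ, sum_congr rfl hins, ← sum_mul, insProd_succ_self, hprev,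
      prod_range_succ, Nat.add_sub_cancel, hnew, hcross]
    linear_combination (a m + b m) * ih

def crossPairs (k : ℕ → ℤ) (x : ℤ) (p j : ℕ) : ℤ × ℤ :=
  if j = p then (x, k (p + 1)) else if j = p + 1 then (k (p + 1), x) else adjPairs k j

lemma sum_weight_rep (k : ℕ → ℤ) (x : ℤ) (m : ℕ) (l : ℕ → ℤ) :
    ∑ i ∈ range (m + 2), weight (adjPairs (rep k i x)) (m + 1) l
      = weight (adjPairs k) (m + 1) l + ∑ p ∈ range m, weight (crossPairs k x p) (m + 1) l := by
  have key := sum_insProd (fun j => chi (k j) x (l j)) (fun j => chi x (k (j + 1)) (l j)) (m + 1)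
  rw [Nat.add_sub_cancel] at key
  convert key using 2
  · refine prod_congr rfl fun j _ => ?_
    simp only [adjPairs, rep]
    split_ifs <;> first | omega | simp_all [chi_add]
  · exact prod_congr rfl fun j _ => (chi_add _ _ _ _).symm
  · refine sum_congr rfl fun p _ => prod_congr rfl fun j _ => ?_
    simp only [crossPairs, adjPairs]
    split_ifs <;> first | omega | simp_all [chi_add]

lemma signedCount_eq_sum_rep {n : ℕ} (hn : 0 < n) (k : ℕ → ℤ) (x : ℤ) (M : ℕ → Multiset ℤ) :
    signedCount n k M = ∑ i ∈ range n, signedCount n (rep k i x) M := by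
  rcases n with _ | _ | m
  · omega
  · simp [signedCount]
  set S := box k (m + 2) ∪ (range (m + 2)).biUnion fun i => box (rep k i x) (m + 2)
  have hS : ∀ i ∈ range (m + 2), box (rep k i x) (m + 2) ⊆ S :=
    fun i hi =>
      (subset_biUnion_of_mem (fun i => box (rep k i x) (m + 2)) hi).trans subset_union_right
  have hcross : ∀ p ∈ range m,
      ∑ l ∈ funsOn (m + 1) S, weight (crossPairs k x p) (m + 1) l * rowTerm m M l = 0 :=
    fun p hp => sum_weight_mul_rowTerm_eq_zero (swapAntisymm (m + 1)) (p := p)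
      (by rw [mem_range] at hp; omega) (Or.inr (by simp [crossPairs])) S M
  rw [signedCount_eq_sum_of_box_subset subset_union_left,
    sum_congr rfl fun i hi => signedCount_eq_sum_of_box_subset (hS i hi) M, sum_comm]
  simp_rw [← sum_mul, sum_weight_rep, add_mul, sum_add_distrib, sum_mul]
  rw [sum_comm (s := funsOn (m + 1) S), sum_congr rfl hcross, sum_const_zero, add_zero]

def withBottom (r : ℕ) (k : ℕ → ℤ) (t : ℕ → ℕ → ℤ) : ℕ → ℕ → ℤ :=
  Function.update t r fun j => if j ≤ r then k j else 0

lemma withBottom_of_ne {r i : ℕ} (k : ℕ → ℤ) (t : ℕ → ℕ → ℤ) (h : i ≠ r) :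
    withBottom r k t i = t i :=
  Function.update_of_ne h _ _

lemma withBottom_self_of_le {r j : ℕ} (k : ℕ → ℤ) (t : ℕ → ℕ → ℤ) (h : j ≤ r) :
    withBottom r k t r j = k j := by
  simp [withBottom, h]

lemma isGT_one_iff {k : ℕ → ℤ} {t : ℕ → ℕ → ℤ} : IsGT 1 k t ↔ t = withBottom 0 k 0 := by
  constructor
  · rintro ⟨hbot, -, hzero⟩
    ext i j
    rcases Nat.eq_zero_or_pos i with rfl | hi
    · rcases Nat.eq_zero_or_pos j with rfl | hj
      · simpa [withBottom] using hbot 0 one_pos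
      · simpa [withBottom, hj.ne'] using hzero 0 j (Or.inr hj)
    · simpa [withBottom, hi.ne'] using hzero i j (Or.inl hi)
  · rintro rfl
    refine ⟨fun j hj => ?_, fun i j hi => absurd hi (by omega), fun i j hij => ?_⟩
    · simp [withBottom, show j = 0 by omega]
    · rcases Nat.eq_zero_or_pos i with rfl | hi
      · simp [withBottom, show j ≠ 0 by omega]
      · simp [withBottom, hi.ne']

lemma isGT_withBottom {m : ℕ} {k l : ℕ → ℤ} {t : ℕ → ℕ → ℤ} (ht : IsGT (m + 1) l t)
    (hl : ∀ j < m + 1, between (k j) (k (j + 1)) (l j)) :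
    IsGT (m + 2) k (withBottom (m + 1) k t) := by
  obtain ⟨hbot, hint, hzero⟩ := ht
  simp only [Nat.add_sub_cancel] at hbot hzero
  refine ⟨fun j hj => withBottom_self_of_le k t (by omega), fun i j hi hj => ?_, fun i j hij => ?_⟩
  · rcases (show i = m ∨ i + 1 < m + 1 by omega) with rfl | hi'
    · rw [withBottom_self_of_le _ _ (by omega), withBottom_self_of_le _ _ (by omega),
        withBottom_of_ne _ _ (by omega), hbot j (by omega)]
      exact hl j (by omega)
    · rw [withBottom_of_ne (i := i + 1) _ _ (by omega), withBottom_of_ne (i := i) _ _ (by omega)]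
      exact hint i j hi' hj
  · by_cases hi : i = m + 1
    · subst hi
      simp [withBottom, show ¬j ≤ m + 1 by omega]
    · rw [withBottom_of_ne _ _ hi]
      exact hzero i j (by omega)

lemma isGT_update_bottom {m : ℕ} {k : ℕ → ℤ} {t : ℕ → ℕ → ℤ} (ht : IsGT (m + 2) k t) :
    IsGT (m + 1) (t m) (Function.update t (m + 1) 0) := by
  obtain ⟨-, hint, hzero⟩ := ht
  refine ⟨fun j _ => ?_, fun i j hi hj => ?_, fun i j hij => ?_⟩
  · simp
  · rw [Function.update_of_ne (by omega), Function.update_of_ne (by omega)]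
    exact hint i j (by omega) hj
  · by_cases hi : i = m + 1
    · simp [hi]
    · rw [Function.update_of_ne hi]
      exact hzero i j (by omega)

lemma withBottom_update_bottom {m : ℕ} {k : ℕ → ℤ} {t : ℕ → ℕ → ℤ} (ht : IsGT (m + 2) k t) :
    withBottom (m + 1) k (Function.update t (m + 1) 0) = t := by
  obtain ⟨hbot, -, hzero⟩ := ht
  ext i j
  by_cases hi : i = m + 1
  · subst hi
    by_cases hj : j ≤ m + 1
    · rw [withBottom_self_of_le _ _ hj]
      exact (hbot j (by omega)).symm
    · simp [withBottom, hj, hzero (m + 1) j (Or.inr (by omega))]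
  · rw [withBottom_of_ne _ _ hi, Function.update_of_ne hi]

lemma between_of_isGT {m j : ℕ} {k : ℕ → ℤ} {t : ℕ → ℕ → ℤ} (ht : IsGT (m + 2) k t)
    (hj : j < m + 1) : between (k j) (k (j + 1)) (t m j) := by
  obtain ⟨hbot, hint, -⟩ := ht
  replace hbot : ∀ j < m + 2, t (m + 1) j = k j := hbot
  simpa only [hbot j (by omega), hbot (j + 1) (by omega)] using hint m j (by omega) (by omega)

lemma row_mem_funsOn_of_isGT {m : ℕ} {k : ℕ → ℤ} {t : ℕ → ℕ → ℤ} (ht : IsGT (m + 2) k t) :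
    t m ∈ funsOn (m + 1) (box k (m + 2)) :=
  mem_funsOn.2 ⟨fun j hj => mem_box_of_between (by omega) (between_of_isGT ht hj),
    fun j hj => ht.2.2 m j (Or.inr (by omega))⟩

lemma last_row_eq_of_isGT {m : ℕ} {l : ℕ → ℤ} {t : ℕ → ℕ → ℤ} (ht : IsGT (m + 1) l t)
    (hl : ∀ j, m + 1 ≤ j → l j = 0) : t m = l := by
  ext j
  by_cases hj : j < m + 1
  · exact ht.1 j hj
  · rw [hl j (by omega)]
    exact ht.2.2 m j (Or.inr (by omega))

/-- The patterns with bottom row `k`, built along `GT(k) = ⨆_l GT(l)`. -/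
def gtFinset : ℕ → (ℕ → ℤ) → Finset (ℕ → ℕ → ℤ)
  | 0, _ => ∅
  | 1, k => {withBottom 0 k 0}
  | m + 2, k => ((funsOn (m + 1) (box k (m + 2))).filter fun l =>
        ∀ j < m + 1, between (k j) (k (j + 1)) (l j)).biUnion
      fun l => (gtFinset (m + 1) l).image (withBottom (m + 1) k)

lemma mem_gtFinset {n : ℕ} (hn : 0 < n) {k : ℕ → ℤ} {t : ℕ → ℕ → ℤ} :
    t ∈ gtFinset n k ↔ IsGT n k t := by
  induction n generalizing k t with
  | zero => omega
  | succ n ih =>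
  rcases n with _ | m
  · simp [gtFinset, isGT_one_iff]
  simp only [gtFinset, mem_biUnion, mem_filter, mem_image, ih (Nat.succ_pos m)]
  constructor
  · rintro ⟨l, ⟨-, hl⟩, t', ht', rfl⟩
    exact isGT_withBottom ht' hl
  · intro ht
    exact ⟨t m, ⟨row_mem_funsOn_of_isGT ht, fun j hj => between_of_isGT ht hj⟩,
      _, isGT_update_bottom ht, withBottom_update_bottom ht⟩

lemma gtSign_withBottom (m : ℕ) (k : ℕ → ℤ) (t : ℕ → ℕ → ℤ) :
    gtSign (m + 2) (withBottom (m + 1) k t)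
      = (∏ j ∈ range (m + 1), isign (k j) (k (j + 1)) (t m j)) * gtSign (m + 1) t := by
  rw [gtSign, gtSign, show m + 2 - 1 = m + 1 from rfl, Nat.add_sub_cancel, prod_range_succ,
    mul_comm]
  congr 1
  · refine prod_congr rfl fun j hj => ?_
    rw [mem_range] at hj
    rw [withBottom_self_of_le _ _ (by omega), withBottom_self_of_le _ _ (by omega),
      withBottom_of_ne _ _ (by omega)]
  · refine prod_congr rfl fun i hi => prod_congr rfl fun j _ => ?_
    rw [mem_range] at hi
    rw [withBottom_of_ne (i := i + 1) _ _ (by omega), withBottom_of_ne (i := i) _ _ (by omega)]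

/-- The statistic `(η_{row,1}, …, η_{row,n−1})`, padded with empty multisets. -/
def rowProfile (n : ℕ) (t : ℕ → ℕ → ℤ) (r : ℕ) : Multiset ℤ :=
  if r + 1 < n then rowMS t r else 0

lemma rowProfile_withBottom (m : ℕ) (k : ℕ → ℤ) (t : ℕ → ℕ → ℤ) :
    rowProfile (m + 2) (withBottom (m + 1) k t)
      = Function.update (rowProfile (m + 1) t) m (rowMS t m) := by
  ext1 r
  have hrow : rowMS (withBottom (m + 1) k t) r = rowMS t r ∨ m + 1 ≤ r := by
    by_cases hr : r = m + 1
    · exact Or.inr hr.ge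
    · exact Or.inl (by simp [rowMS, withBottom_of_ne _ _ hr])
  rcases eq_or_ne r m with rfl | hr
  · simp [rowProfile, hrow.resolve_right (by omega)]
  · rw [Function.update_of_ne hr, rowProfile, rowProfile]
    rcases hrow with h | h
    · rw [h]
      split_ifs <;> first | rfl | omega
    · rw [if_neg (by omega), if_neg (by omega)]

lemma rowProfile_withBottom_eq_iff (m : ℕ) (k : ℕ → ℤ) (t : ℕ → ℕ → ℤ)
    (M : ℕ → Multiset ℤ) : rowProfile (m + 2) (withBottom (m + 1) k t) = M ↔
      M m = rowMS t m ∧ rowProfile (m + 1) t = Function.update M m 0 := by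
  have hm : rowProfile (m + 1) t m = 0 := if_neg (by omega)
  rw [rowProfile_withBottom, Function.update_eq_iff, Function.eq_update_iff, hm, eq_comm]
  simp

lemma last_row_eq_of_mem_gtFinset {m : ℕ} {S : Finset ℤ} {l : ℕ → ℤ} {t : ℕ → ℕ → ℤ}
    (hl : l ∈ funsOn (m + 1) S) (ht : t ∈ gtFinset (m + 1) l) : t m = l :=
  last_row_eq_of_isGT ((mem_gtFinset (Nat.succ_pos m)).1 ht) (mem_funsOn.1 hl).2

lemma disjoint_image_withBottom {m : ℕ} {S : Finset ℤ} {k l₁ l₂ : ℕ → ℤ}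
    (h₁ : l₁ ∈ funsOn (m + 1) S) (h₂ : l₂ ∈ funsOn (m + 1) S) (hne : l₁ ≠ l₂) :
    Disjoint ((gtFinset (m + 1) l₁).image (withBottom (m + 1) k))
      ((gtFinset (m + 1) l₂).image (withBottom (m + 1) k)) := by
  simp only [disjoint_left, mem_image]
  rintro _ ⟨t₁, ht₁, rfl⟩ ⟨t₂, ht₂, he⟩
  apply hne
  rw [← last_row_eq_of_mem_gtFinset h₁ ht₁, ← last_row_eq_of_mem_gtFinset h₂ ht₂,
    ← withBottom_of_ne k t₁ (show m ≠ m + 1 by omega), ← he, withBottom_of_ne]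
  omega

lemma sum_gtSign_image_withBottom {m : ℕ} {k l : ℕ → ℤ} (hl : l ∈ funsOn (m + 1) (box k (m + 2)))
    (hbet : ∀ j < m + 1, between (k j) (k (j + 1)) (l j))
    (ih : ∀ M, signedCount (m + 1) l M
      = ∑ t ∈ (gtFinset (m + 1) l).filter (rowProfile (m + 1) · = M), gtSign (m + 1) t)
    (M : ℕ → Multiset ℤ) :
    ∑ t ∈ ((gtFinset (m + 1) l).image (withBottom (m + 1) k)).filter (rowProfile (m + 2) · = M),
      gtSign (m + 2) t = weight (adjPairs k) (m + 1) l * rowTerm m M l := by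
  have hmem : ∀ t ∈ gtFinset (m + 1) l, IsGT (m + 1) l t :=
    fun t ht => (mem_gtFinset (Nat.succ_pos m)).1 ht
  have hinj : Set.InjOn (withBottom (m + 1) k) (gtFinset (m + 1) l) := by
    intro t₁ h₁ t₂ h₂ he
    ext i j
    by_cases hi : i = m + 1
    · rw [hi, (hmem t₁ h₁).2.2 _ j (Or.inl (by omega)), (hmem t₂ h₂).2.2 _ j (Or.inl (by omega))]
    · simpa [withBottom_of_ne _ _ hi] using congrFun (congrFun he i) j
  have hsign : ∀ t ∈ gtFinset (m + 1) l, gtSign (m + 2) (withBottom (m + 1) k t)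
      = weight (adjPairs k) (m + 1) l * gtSign (m + 1) t := fun t ht => by
    rw [gtSign_withBottom, last_row_eq_of_mem_gtFinset hl ht, weight]
    congr 1
    exact prod_congr rfl fun j hj => (chi_of_between (hbet j (mem_range.1 hj))).symm
  have hprof : ∀ t ∈ gtFinset (m + 1) l, rowProfile (m + 2) (withBottom (m + 1) k t) = M ↔
      M m = initMS (m + 1) l ∧ rowProfile (m + 1) t = Function.update M m 0 := fun t ht => by
    rw [rowProfile_withBottom_eq_iff, rowMS_eq_initMS, last_row_eq_of_mem_gtFinset hl ht]
  rw [filter_image, sum_image fun t₁ h₁ t₂ h₂ => hinj (mem_filter.1 h₁).1 (mem_filter.1 h₂).1,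
    rowTerm]
  split_ifs with hc
  · rw [ih, mul_sum, filter_congr fun t ht => (hprof t ht).trans (and_iff_right hc)]
    exact sum_congr rfl fun t ht => hsign t (mem_filter.1 ht).1
  · rw [filter_false_of_mem fun t ht h => hc ((hprof t ht).1 h).1, sum_empty, mul_zero]

lemma signedCount_eq_sum_gtSign {n : ℕ} (hn : 0 < n) (k : ℕ → ℤ) (M : ℕ → Multiset ℤ) :
    signedCount n k M = ∑ t ∈ (gtFinset n k).filter (rowProfile n · = M), gtSign n t := by
  induction n generalizing k M with
  | zero => omega
  | succ n ih =>
  rcases n with _ | m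
  · have h0 : rowProfile 1 (withBottom 0 k 0) = 0 := funext fun r => if_neg (by omega)
    simp only [signedCount, gtFinset, filter_singleton, h0, eq_comm]
    split_ifs <;> simp [gtSign]
  have hvalid : ∀ l ∈ funsOn (m + 1) (box k (m + 2)),
      weight (adjPairs k) (m + 1) l * rowTerm m M l ≠ 0 →
      ∀ j < m + 1, between (k j) (k (j + 1)) (l j) := by
    intro l _ hne j hj
    by_contra hb
    rw [weight, prod_eq_zero (mem_range.2 hj) (chi_of_not_between hb), zero_mul] at hne
    exact hne rfl
  rw [signedCount_eq_sum_of_box_subset subset_rfl, gtFinset, filter_biUnion,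
    sum_biUnion fun l₁ h₁ l₂ h₂ hne => disjoint_filter_filter
      (disjoint_image_withBottom (mem_filter.1 h₁).1 (mem_filter.1 h₂).1 hne),
    ← sum_filter_of_ne hvalid]
  exact sum_congr rfl fun l hl => (sum_gtSign_image_withBottom (mem_filter.1 hl).1
    (mem_filter.1 hl).2 (ih (Nat.succ_pos m) l) M).symm

lemma gtSign_eq_one_or_neg_one (n : ℕ) (t : ℕ → ℕ → ℤ) : gtSign n t = 1 ∨ gtSign n t = -1 := by
  rw [← Int.isUnit_iff, gtSign, IsUnit.prod_iff]
  refine fun i _ => IsUnit.prod_iff.2 fun j _ => ?_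
  rw [isign]
  split_ifs <;> simp

def gtCount (n : ℕ) (k : ℕ → ℤ) (s : ℤ) (c : ℕ → Multiset ℤ) : ℕ :=
  #((gtFinset n k).filter fun t => rowProfile n t = c ∧ gtSign n t = s)

lemma signedCount_eq_gtCount_sub {n : ℕ} (hn : 0 < n) (k : ℕ → ℤ) (c : ℕ → Multiset ℤ) :
    signedCount n k c = gtCount n k 1 c - gtCount n k (-1) c := by
  have hsplit : ∀ t, gtSign n t
      = (if gtSign n t = 1 then 1 else 0) - (if gtSign n t = -1 then 1 else 0) := fun t => by
    rcases gtSign_eq_one_or_neg_one n t with h | h <;> simp [h]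
  rw [signedCount_eq_sum_gtSign hn, sum_congr rfl fun t _ => hsplit t, sum_sub_distrib,
    sum_boole, sum_boole, filter_filter, filter_filter, gtCount, gtCount]

lemma gtCount_add_sum_gtCount {n : ℕ} (hn : 0 < n) (k : ℕ → ℤ) (x : ℤ) (c : ℕ → Multiset ℤ) :
    gtCount n k 1 c + ∑ i ∈ range n, gtCount n (rep k i x) (-1) c
      = gtCount n k (-1) c + ∑ i ∈ range n, gtCount n (rep k i x) 1 c := by
  have h := signedCount_eq_sum_rep hn k x c
  simp only [signedCount_eq_gtCount_sub hn, sum_sub_distrib] at h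
  zify
  linarith

lemma finite_isGT {n : ℕ} (hn : 0 < n) (k : ℕ → ℤ) (P : (ℕ → ℕ → ℤ) → Prop) :
    Finite {t // IsGT n k t ∧ P t} :=
  Finite.of_injective (fun t => (⟨t.1, (mem_gtFinset hn).2 t.2.1⟩ : gtFinset n k))
    fun _ _ h => Subtype.ext (congrArg (fun u : gtFinset n k => u.val) h)

lemma finite_indexed_isGT {n : ℕ} (hn : 0 < n) (K : ℕ → ℕ → ℤ) (P : (ℕ → ℕ → ℤ) → Prop) :
    Finite {p : ℕ × (ℕ → ℕ → ℤ) // p.1 < n ∧ IsGT n (K p.1) p.2 ∧ P p.2} :=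
  Finite.of_injective (β := range n × (range n).biUnion fun i => gtFinset n (K i))
    (fun p => (⟨p.1.1, mem_range.2 p.2.1⟩,
      ⟨p.1.2, mem_biUnion.2 ⟨p.1.1, mem_range.2 p.2.1, (mem_gtFinset hn).2 p.2.2.1⟩⟩))
    fun _ _ h => Subtype.ext (Prod.ext (congrArg (·.1.val) h) (congrArg (·.2.val) h))

lemma natCard_fiber_isGT {n : ℕ} (hn : 0 < n) (k : ℕ → ℤ) (s : ℤ) (c : ℕ → Multiset ℤ) :
    Nat.card {u : {t // IsGT n k t ∧ gtSign n t = s} // rowProfile n u.1 = c}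
      = gtCount n k s c := by
  rw [gtCount, ← Nat.card_eq_finsetCard]
  refine Nat.card_congr ((Equiv.subtypeSubtypeEquivSubtypeInter
    (fun t => IsGT n k t ∧ gtSign n t = s) (rowProfile n · = c)).trans
    (Equiv.subtypeEquivRight fun t => ?_))
  rw [mem_filter, mem_gtFinset hn]
  tauto

lemma natCard_fiber_indexed_isGT {n : ℕ} (hn : 0 < n) (K : ℕ → ℕ → ℤ) (s : ℤ)
    (c : ℕ → Multiset ℤ) :
    Nat.card {u : {p : ℕ × (ℕ → ℕ → ℤ) // p.1 < n ∧ IsGT n (K p.1) p.2 ∧ gtSign n p.2 = s} //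
      rowProfile n u.1.2 = c} = ∑ i ∈ range n, gtCount n (K i) s c := by
  let e : {u : {p : ℕ × (ℕ → ℕ → ℤ) // p.1 < n ∧ IsGT n (K p.1) p.2 ∧ gtSign n p.2 = s} //
      rowProfile n u.1.2 = c} ≃
      Σ i : Fin n, {u : {t // IsGT n (K i) t ∧ gtSign n t = s} // rowProfile n u.1 = c} :=
    { toFun := fun u => ⟨⟨u.1.1.1, u.1.2.1⟩, ⟨⟨u.1.1.2, u.1.2.2⟩, u.2⟩⟩
      invFun := fun v => ⟨⟨(v.1, v.2.1.1), v.1.2, v.2.1.2⟩, v.2.2⟩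
      left_inv := fun _ => rfl
      right_inv := fun _ => rfl }
  have (i : Fin n) := finite_isGT hn (K i) (gtSign n · = s)
  rw [Nat.card_congr e, Nat.card_sigma, ← Fin.sum_univ_eq_sum_range fun i => gtCount n (K i) s c]
  exact sum_congr rfl fun i _ => natCard_fiber_isGT hn (K i) s c

end

end GTPattern

open GTPattern

/-- For each `k ∈ ℤⁿ` and `x ∈ ℤ` there is a sijection
`τ : GT(k₁,…,kₙ) ⇒ ⨆_{i=1}^{n} GT(k₁,…,kᵢ₋₁,x,kᵢ₊₁,…,kₙ)`, compatible with the
statistics `η_{row,1}, …, η_{row,n−1}` recording the multisets of entries of the top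
`n−1` rows. -/
theorem gt_tau (n : ℕ) (hn : 0 < n) (k : ℕ → ℤ) (x : ℤ) :
    ∃ e : (GTp n k ⊕
            {p : ℕ × (ℕ → ℕ → ℤ) // p.1 < n ∧ IsGT n (rep k p.1 x) p.2 ∧ gtSign n p.2 = -1}) ≃
          (GTm n k ⊕
            {p : ℕ × (ℕ → ℕ → ℤ) // p.1 < n ∧ IsGT n (rep k p.1 x) p.2 ∧ gtSign n p.2 = 1}),
      ∀ z, ∀ r, r + 1 < n →
        rowMS (Sum.elim Subtype.val (fun u => u.val.2) (e z)) r
          = rowMS (Sum.elim Subtype.val (fun u => u.val.2) z) r := by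
  have (s : ℤ) : Finite {t // IsGT n k t ∧ gtSign n t = s} := finite_isGT hn k _
  have (s : ℤ) : Finite {p : ℕ × (ℕ → ℕ → ℤ) // p.1 < n ∧ IsGT n (rep k p.1 x) p.2 ∧
    gtSign n p.2 = s} := finite_indexed_isGT hn (rep k · x) (gtSign n · = s)
  refine (exists_equiv_comp_eq_of_card_fiber
    (rowProfile n ∘ Sum.elim Subtype.val (Prod.snd ∘ Subtype.val))
    (rowProfile n ∘ Sum.elim Subtype.val (Prod.snd ∘ Subtype.val)) fun c => ?_).imp
    fun e he z r hr => by
      have := congrFun (he z) r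
      simp only [Function.comp_def, rowProfile, if_pos hr] at this
      exact this
  rw [Sum.comp_elim, Sum.comp_elim, Nat.card_fiber_sum_elim, Nat.card_fiber_sum_elim]
  simp only [Function.comp_apply]
  rw [natCard_fiber_isGT hn k 1 c, natCard_fiber_isGT hn k (-1) c,
    natCard_fiber_indexed_isGT hn (rep k · x), natCard_fiber_indexed_isGT hn (rep k · x)]
  exact gtCount_add_sum_gtCount hn k x c
end

section
/- Let f₁,…,fₙ ∈ ℝ^{n−1} with fᵢ = e₁ + e₂ + ⋯ + e_{i−1} (so f₁ = 0), and let t₁,…,tₙ ∈ {1,…,n}. Then det(f_{t₂}−f_{t₁}, f_{t₃}−f_{t₂}, …, f_{tₙ}−f_{t_{n−1}}) equals the sign of the tuple (t₁,…,tₙ) (the sign of the sorting permutation if the tᵢ are distinct, and 0 otherwise). -/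
/-- `f i = e₁ + e₂ + ⋯ + e_{i}` in `ℝⁿ` (0-based: `f 0 = 0`), i.e. the vector whose
first `i` coordinates are `1`. -/
def fvec (n : ℕ) (i : Fin (n + 1)) : Fin n → ℝ := fun j => if (j : ℕ) < (i : ℕ) then 1 else 0

/-- The sign of a tuple: the sign of the sorting permutation if its entries are
distinct, and `0` otherwise. -/
noncomputable def tupleSgnF (n : ℕ) (t : Fin (n + 1) → Fin (n + 1)) : ℝ :=
  if Function.Injective t
  then (((Equiv.Perm.sign (Tuple.sort t) : ℤˣ) : ℤ) : ℝ) else 0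

/-- The determinant of the upper-triangular all-ones-above-diagonal matrix is 1. -/
lemma det_le_indicator (m : ℕ) :
    (Matrix.of fun r c : Fin m => if (r : ℕ) ≤ (c : ℕ) then (1 : ℝ) else 0).det = 1 := by
  rw [Matrix.det_of_upperTriangular]
  · simp
  · intro i j hji
    have : (j : ℕ) < (i : ℕ) := hji
    simp only [Matrix.of_apply]
    rw [if_neg (by omega)]

/-- With `f₁, …, fₙ ∈ ℝ^{n−1}` given by `fᵢ = e₁ + ⋯ + e_{i−1}` and
`t₁, …, tₙ ∈ {1, …, n}`, the determinant of the matrix with columns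
`f_{t₂}−f_{t₁}, f_{t₃}−f_{t₂}, …, f_{tₙ}−f_{t_{n−1}}` equals the sign of the tuple
`(t₁, …, tₙ)`. -/
theorem det_of_difference_columns (n : ℕ) (t : Fin (n + 1) → Fin (n + 1)) :
    Matrix.det (Matrix.of fun (r c : Fin n) =>
        fvec n (t c.succ) r - fvec n (t c.castSucc) r)
      = tupleSgnF n t := by
  set N : Matrix (Fin (n + 1)) (Fin (n + 1)) ℝ :=
    Matrix.of fun r c => if (r : ℕ) ≤ ((t c : Fin (n + 1)) : ℕ) then 1 else 0 with hN
  set B : Matrix (Fin (n + 1)) (Fin (n + 1)) ℝ :=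
    Matrix.of fun r c =>
      Fin.cases (N r 0) (fun j => N r j.succ - N r j.castSucc) c with hB
  have hNB : N.det = B.det := by
    apply Matrix.det_eq_of_forall_col_eq_smul_add_pred (fun _ => (1 : ℝ))
    · intro i; simp [hB]
    · intro i j; simp [hB]
  have hNsucc : ∀ (r : Fin n) (c : Fin (n + 1)), N r.succ c = fvec n (t c) r := by
    intro r c
    simp only [hN, Matrix.of_apply, fvec, Fin.val_succ, Nat.add_one_le_iff]
  have hB0 : ∀ j : Fin (n + 1), B 0 j = if j = 0 then 1 else 0 := by
    intro j
    refine Fin.cases ?_ ?_ j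
    · simp [hB, hN]
    · intro j
      simp [hB, hN, Fin.succ_ne_zero]
  have hBM : B.det = Matrix.det (Matrix.of fun (r c : Fin n) =>
      fvec n (t c.succ) r - fvec n (t c.castSucc) r) := by
    rw [Matrix.det_succ_row_zero]
    rw [Finset.sum_eq_single 0]
    · rw [hB0 0, if_pos rfl]
      simp only [Fin.val_zero, pow_zero, one_mul, mul_one]
      congr 1
    · intro b _ hb
      rw [hB0 b, if_neg hb]
      ring
    · intro h
      exact absurd (Finset.mem_univ 0) h
  have hNdet : N.det = tupleSgnF n t := by
    by_cases ht : Function.Injective t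
    · have hbij : Function.Bijective t := Finite.injective_iff_bijective.mp ht
      set e : Equiv.Perm (Fin (n + 1)) := Equiv.ofBijective t hbij with he
      have hNsub : N = (Matrix.of fun r c : Fin (n + 1) =>
          if (r : ℕ) ≤ (c : ℕ) then (1 : ℝ) else 0).submatrix id e := by
        ext r c
        simp [hN, he, Equiv.ofBijective]
      rw [hNsub, Matrix.det_permute', det_le_indicator, mul_one]
      have hsm : StrictMono (t ∘ Tuple.sort t) :=
        (Tuple.monotone_sort t).strictMono_of_injective
          (ht.comp (Tuple.sort t).injective)
      have hsurj : Function.Surjective (t ∘ Tuple.sort t) :=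
        hbij.2.comp (Tuple.sort t).surjective
      haveI : WellFoundedLT (Fin (n + 1)) := inferInstance
      have hid : t ∘ Tuple.sort t = id :=
        (hsm.range_inj strictMono_id).mp (by rw [hsurj.range_eq, Set.range_id])
      have hsort : Tuple.sort t = e.symm := by
        apply Equiv.ext
        intro x
        have h1 : e ((Tuple.sort t) x) = x := congrFun hid x
        simpa using congrArg e.symm h1
      rw [tupleSgnF, if_pos ht, hsort, Equiv.Perm.sign_symm]
    · obtain ⟨i, j, hij, hne⟩ := Function.not_injective_iff.mp ht
      rw [Matrix.det_zero_of_column_eq hne (fun k => by simp [hN, hij])]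
      rw [tupleSgnF, if_neg ht]
  rw [← hBM, ← hNB, hNdet]
end

section
/- Let A = (a_{ij}) be an n×n alternating sign matrix and B = (b_{ij}) the corresponding monotone triangle (b_{ij} is the column index of the j-th entry 1 in the vector of partial column sums of rows 1..i, shifted by j−1 so that rows are strictly increasing with gaps). Then the generalized inversion number of A equals that of B: ∑_{i < i', j' ≤ j} a_{ij} a_{i'j'} = #{(i,j) : 1 ≤ j ≤ i ≤ n−1, b_{i+1,j} ≤ b_{ij} = b_{i+1,j+1} − 1}. -/
/-!
Write `c k m = ∑_{i ≤ k} a i m` and `r k m = ∑_{j ≤ m} a k j` for the partial column and row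
sums; both lie in `{0, 1}` because the nonzero entries of every line alternate and sum to `1`.
Summing over `i` and `j'` first, the inversion number becomes `∑_k ∑_m c k m * r (k+1) m`.

Row `k` of `c` has its ones exactly at `P j = b k j - j` (`j ≤ k`), and
`r (k+1) m = ∑_{m' ≤ m} (c (k+1) m' - c k m')` is the number of `Q j = b (k+1) j - j` that are
`≤ m` minus the number of `P j` that are `≤ m`. At `m = P j` the second count is `j + 1`; since
the difference never exceeds `1`, it equals `1` exactly when `Q (j+1) = P j` (and then
`Q j < Q (j+1) = P j`), which is the condition `b (k+1) j ≤ b k j = b (k+1) (j+1) - 1`.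
-/

open Finset

structure IsSignAlternating (n : ℕ) (f : ℕ → ℤ) : Prop where
  mem : ∀ k < n, f k = -1 ∨ f k = 0 ∨ f k = 1
  alt : ∀ k k', k < k' → k' < n → f k ≠ 0 → f k' ≠ 0 →
    (∀ k'', k < k'' → k'' < k' → f k'' = 0) → f k = -f k'

namespace IsSignAlternating

variable {n : ℕ} {f : ℕ → ℤ}

theorem sum_Ico_eq_zero_or_eq_last (hf : IsSignAlternating n f) (lo : ℕ) {hi : ℕ}
    (hhi : hi ≤ n) :
    ∑ k ∈ Ico lo hi, f k = 0 ∨ ∃ m, lo ≤ m ∧ m < hi ∧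
      (∀ k, m < k → k < hi → f k = 0) ∧ ∑ k ∈ Ico lo hi, f k = f m := by
  induction hi with
  | zero => simp
  | succ h ih =>
    rcases lt_or_ge h lo with hlo | hlo
    · simp [Ico_eq_empty_of_le (show h + 1 ≤ lo by omega)]
    rw [sum_Ico_succ_top hlo]
    have last (s : ℤ) (hs : s = 0) : s + f h = 0 ∨ ∃ m, lo ≤ m ∧ m < h + 1 ∧
        (∀ k, m < k → k < h + 1 → f k = 0) ∧ s + f h = f m :=
      .inr ⟨h, hlo, by omega, fun k hk hk' => by omega, by rw [hs, zero_add]⟩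
    rcases ih (by omega) with hsum | ⟨m, hlm, hmh, hzero, hsum⟩
    · exact last _ hsum
    by_cases hfh : f h = 0
    · refine .inr ⟨m, hlm, by omega, fun k hmk hk => ?_, by rw [hsum, hfh, add_zero]⟩
      rcases Nat.lt_succ_iff_lt_or_eq.mp hk with hk | rfl
      exacts [hzero k hmk hk, hfh]
    by_cases hfm : f m = 0
    · exact last _ (hsum.trans hfm)
    · left
      rw [hsum, hf.alt m h hmh (by omega) hfm hfh hzero, neg_add_cancel]

theorem abs_sum_Ico_le_one (hf : IsSignAlternating n f) (lo : ℕ) {hi : ℕ} (hhi : hi ≤ n) :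
    |∑ k ∈ Ico lo hi, f k| ≤ 1 := by
  rcases hf.sum_Ico_eq_zero_or_eq_last lo hhi with h | ⟨m, -, hm, -, h⟩
  · simp [h]
  · rw [h]
    rcases hf.mem m (by omega) with h' | h' | h' <;> simp [h']

/-- The prefix sum is `1` minus a suffix sum, and both have absolute value at most `1`. -/
theorem sum_range_eq_zero_or_one (hf : IsSignAlternating n f) (hsum : ∑ k ∈ range n, f k = 1)
    {i : ℕ} (hi : i ≤ n) : ∑ k ∈ range i, f k = 0 ∨ ∑ k ∈ range i, f k = 1 := by
  have hprefix := hf.abs_sum_Ico_le_one 0 hi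
  have hsuffix := hf.abs_sum_Ico_le_one i le_rfl
  rw [← range_eq_Ico] at hprefix
  rw [← sum_range_add_sum_Ico _ hi] at hsum
  rw [abs_le] at hprefix hsuffix
  omega

end IsSignAlternating

theorem sum_eq_card_filter_eq_one {ι : Type*} {s : Finset ι} {g : ι → ℤ}
    (hg : ∀ x ∈ s, g x = 0 ∨ g x = 1) : ∑ x ∈ s, g x = #{x ∈ s | g x = 1} := by
  rw [← sum_boole]
  refine sum_congr rfl fun x hx => ?_
  rcases hg x hx with h | h <;> simp [h]

theorem card_filter_product_eq_sum {α β : Type*} (s : Finset α) (t : Finset β)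
    (p : α × β → Prop) [DecidablePred p] :
    #{x ∈ s ×ˢ t | p x} = ∑ x ∈ s, #{y ∈ t | p (x, y)} := by
  simp only [card_filter, sum_product]

def countLE (P : ℕ → ℤ) (t : ℕ) (x : ℤ) : ℕ := #{j ∈ range t | P j ≤ x}

section countLE

variable {P Q : ℕ → ℤ} {t j : ℕ}

theorem succ_le_countLE_iff (hP : StrictMonoOn P (Set.Iio t)) (hj : j < t) (x : ℤ) :
    j + 1 ≤ countLE P t x ↔ P j ≤ x := by
  constructor
  · intro h
    by_contra! hx
    have hsub : {i ∈ range t | P i ≤ x} ⊆ range j := by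
      intro i hi
      simp only [mem_filter, mem_range] at hi ⊢
      by_contra! hji
      have := hP.monotoneOn (Set.mem_Iio.2 hj) (Set.mem_Iio.2 hi.1) hji
      omega
    have := card_le_card hsub
    simp only [card_range] at this
    unfold countLE at h
    omega
  · intro hx
    have hsub : range (j + 1) ⊆ {i ∈ range t | P i ≤ x} := by
      intro i hi
      simp only [mem_filter, mem_range] at hi ⊢
      exact ⟨by omega, (hP.monotoneOn (Set.mem_Iio.2 (by omega)) (Set.mem_Iio.2 hj)
        (by omega)).trans hx⟩
    simpa [countLE] using card_le_card hsub

theorem countLE_apply_self (hP : StrictMonoOn P (Set.Iio t)) (hj : j < t) :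
    countLE P t (P j) = j + 1 := by
  refine le_antisymm ?_ ((succ_le_countLE_iff hP hj _).2 le_rfl)
  rcases Nat.lt_or_ge (j + 1) t with hj' | hj'
  · by_contra! h
    have := (succ_le_countLE_iff hP hj' _).1 h
    have := hP (Set.mem_Iio.2 hj) (Set.mem_Iio.2 hj') (Nat.lt_succ_self j)
    omega
  · exact (card_filter_le _ _).trans (by simp; omega)

theorem countLE_eq_succ_iff (hP : StrictMonoOn P (Set.Iio t))
    (hQ : StrictMonoOn Q (Set.Iio (t + 1))) (hj : j < t)
    (hle : ∀ x ≤ P j, countLE Q (t + 1) x ≤ countLE P t x + 1) :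
    countLE Q (t + 1) (P j) = countLE P t (P j) + 1 ↔ Q j ≤ P j ∧ P j = Q (j + 1) := by
  have hPj := countLE_apply_self hP hj
  have hbefore : countLE P t (P j - 1) ≤ j := by
    by_contra! h
    have := (succ_le_countLE_iff hP hj _).1 h
    omega
  have hPQ : P j ≤ Q (j + 1) := by
    by_contra! h
    have := (succ_le_countLE_iff hQ (j := j + 1) (by omega) (P j - 1)).2 (by omega)
    have := hle (P j - 1) (by omega)
    omega
  have hQQ : Q j < Q (j + 1) :=
    hQ (Set.mem_Iio.2 (by omega)) (Set.mem_Iio.2 (by omega)) (Nat.lt_succ_self j)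
  have hQP := succ_le_countLE_iff hQ (j := j + 1) (by omega) (P j)
  have := hle (P j) le_rfl
  constructor
  · intro h
    have := hQP.1 (by omega)
    constructor <;> omega
  · rintro ⟨-, h⟩
    have := hQP.2 h.ge
    omega

end countLE

section enumeration

variable {S : Finset ℕ} {P : ℕ → ℤ} {t : ℕ}

theorem image_range_eq_image_natCast (hP : Set.InjOn P (Set.Iio t))
    (hS : ∀ m ∈ S, ∃ j < t, P j = m) (hcard : #S = t) :
    (range t).image P = S.image (↑) := by
  refine (eq_of_subset_of_card_le ?_ ?_).symm
  · intro x hx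
    obtain ⟨m, hm, rfl⟩ := mem_image.1 hx
    obtain ⟨j, hj, hPj⟩ := hS m hm
    exact mem_image.2 ⟨j, mem_range.2 hj, hPj⟩
  · rw [card_image_of_injOn (by rwa [coe_range]), card_range,
      card_image_of_injective _ Nat.cast_injective, hcard]

theorem sum_eq_sum_range_of_image_eq {M : Type*} [AddCommMonoid M]
    (hP : Set.InjOn P (Set.Iio t)) (h : (range t).image P = S.image (↑)) (g : ℤ → M) :
    ∑ m ∈ S, g m = ∑ j ∈ range t, g (P j) := by
  rw [← sum_image (f := g) fun x _ y _ => Nat.cast_inj.1, ← h,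
    sum_image (by rwa [coe_range])]

theorem countLE_eq_card_filter (hP : Set.InjOn P (Set.Iio t))
    (h : (range t).image P = S.image (↑)) (x : ℤ) :
    countLE P t x = #(S.filter fun m : ℕ => (m : ℤ) ≤ x) := by
  simp only [countLE, card_filter]
  exact (sum_eq_sum_range_of_image_eq hP h fun y => if y ≤ x then 1 else 0).symm

end enumeration

def partialColSum (a : ℕ → ℕ → ℤ) (i j : ℕ) : ℤ := ∑ i' ∈ range (i + 1), a i' j

def partialRowSum (a : ℕ → ℕ → ℤ) (i j : ℕ) : ℤ := ∑ j' ∈ range (j + 1), a i j'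

def partialColSumOnes (a : ℕ → ℕ → ℤ) (n i : ℕ) : Finset ℕ :=
  {j ∈ range n | partialColSum a i j = 1}

theorem inversion_sum_eq_sum_partialColSum_mul (n : ℕ) (a : ℕ → ℕ → ℤ) :
    ∑ i ∈ range n, ∑ i' ∈ range n, ∑ j ∈ range n, ∑ j' ∈ range n,
        (if i < i' ∧ j' ≤ j then a i j * a i' j' else 0)
      = ∑ k ∈ range (n - 1), ∑ j ∈ range n,
          partialColSum a k j * partialRowSum a (k + 1) j := by
  have hfactor : ∀ i' < n, ∀ j < n,
      ∑ i ∈ range n, ∑ j' ∈ range n, (if i < i' ∧ j' ≤ j then a i j * a i' j' else 0)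
        = (∑ i ∈ range i', a i j) * partialRowSum a i' j := by
    intro i' hi' j hj
    have hfilter (l : ℕ) (h : l ≤ n) : {x ∈ range n | x < l} = range l := by
      ext x; simp only [mem_filter, mem_range]; omega
    simp_rw [← ite_zero_mul_ite_zero, ← sum_mul_sum, ← sum_filter, Nat.le_iff_lt_add_one]
    rw [hfilter _ hi'.le, hfilter _ (by omega : j + 1 ≤ n), partialRowSum]
  calc _ = ∑ i' ∈ range n, ∑ j ∈ range n, ∑ i ∈ range n, ∑ j' ∈ range n,
          (if i < i' ∧ j' ≤ j then a i j * a i' j' else 0) := by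
        rw [sum_comm]
        exact sum_congr rfl fun _ _ => sum_comm
    _ = ∑ i' ∈ range n, ∑ j ∈ range n, (∑ i ∈ range i', a i j) * partialRowSum a i' j :=
        sum_congr rfl fun i' hi' => sum_congr rfl fun j hj =>
          hfactor i' (mem_range.1 hi') j (mem_range.1 hj)
    _ = _ := by
        cases n with
        | zero => simp
        | succ n => simp [sum_range_succ' _ n, partialColSum]

section ASM

variable {n : ℕ} {a : ℕ → ℕ → ℤ}

theorem partialColSum_eq_zero_or_one (hcol : ∀ j < n, IsSignAlternating n (a · j))
    (colsum : ∀ j < n, ∑ i ∈ range n, a i j = 1) {i j : ℕ} (hi : i < n) (hj : j < n) :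
    partialColSum a i j = 0 ∨ partialColSum a i j = 1 :=
  (hcol j hj).sum_range_eq_zero_or_one (colsum j hj) hi

theorem partialRowSum_eq_zero_or_one (hrow : ∀ i < n, IsSignAlternating n (a i ·))
    (rowsum : ∀ i < n, ∑ j ∈ range n, a i j = 1) {i j : ℕ} (hi : i < n) (hj : j < n) :
    partialRowSum a i j = 0 ∨ partialRowSum a i j = 1 :=
  (hrow i hi).sum_range_eq_zero_or_one (rowsum i hi) hj

theorem card_partialColSumOnes (hcol : ∀ j < n, IsSignAlternating n (a · j))
    (colsum : ∀ j < n, ∑ i ∈ range n, a i j = 1)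
    (rowsum : ∀ i < n, ∑ j ∈ range n, a i j = 1)
    {i : ℕ} (hi : i < n) : #(partialColSumOnes a n i) = i + 1 := by
  have h : ∑ j ∈ range n, partialColSum a i j = i + 1 := by
    simp only [partialColSum]
    rw [sum_comm, sum_congr rfl fun i' hi' => rowsum i' (by simp at hi'; omega)]
    simp
  rw [sum_eq_card_filter_eq_one fun j hj =>
    partialColSum_eq_zero_or_one hcol colsum hi (mem_range.1 hj)] at h
  exact_mod_cast h

theorem sum_partialColSum_eq_card (hcol : ∀ j < n, IsSignAlternating n (a · j))
    (colsum : ∀ j < n, ∑ i ∈ range n, a i j = 1) {i m : ℕ} (hi : i < n) (hm : m < n) :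
    ∑ j ∈ range (m + 1), partialColSum a i j
      = #((partialColSumOnes a n i).filter fun j : ℕ => (j : ℤ) ≤ m) := by
  rw [sum_eq_card_filter_eq_one fun j hj =>
    partialColSum_eq_zero_or_one hcol colsum hi (by simp at hj; omega)]
  congr 2
  ext j
  simp only [partialColSumOnes, mem_filter, mem_range, Nat.cast_le]
  omega

theorem partialRowSum_succ (a : ℕ → ℕ → ℤ) (i j : ℕ) :
    partialRowSum a (i + 1) j = ∑ j' ∈ range (j + 1), partialColSum a (i + 1) j'
      - ∑ j' ∈ range (j + 1), partialColSum a i j' := by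
  simp [partialRowSum, partialColSum, ← sum_sub_distrib, sum_range_succ _ (i + 1)]

theorem image_range_eq_partialColSumOnes (hcol : ∀ j < n, IsSignAlternating n (a · j))
    (colsum : ∀ j < n, ∑ i ∈ range n, a i j = 1)
    (rowsum : ∀ i < n, ∑ j ∈ range n, a i j = 1)
    {i : ℕ} (hi : i < n) {P : ℕ → ℤ} (hP : Set.InjOn P (Set.Iio (i + 1)))
    (hmem : ∀ m < n, partialColSum a i m = 1 → ∃ j ≤ i, P j = m) :
    (range (i + 1)).image P = (partialColSumOnes a n i).image (↑) := by
  refine image_range_eq_image_natCast hP (fun m hm => ?_)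
    (card_partialColSumOnes hcol colsum rowsum hi)
  obtain ⟨hmn, hm1⟩ := mem_filter.1 hm
  obtain ⟨j, hj, hPj⟩ := hmem m (mem_range.1 hmn) hm1
  exact ⟨j, by omega, hPj⟩

theorem partialRowSum_succ_eq_countLE_sub (hcol : ∀ j < n, IsSignAlternating n (a · j))
    (colsum : ∀ j < n, ∑ i ∈ range n, a i j = 1) {k : ℕ} (hk : k + 1 < n)
    {P Q : ℕ → ℤ} (hP : Set.InjOn P (Set.Iio (k + 1))) (hQ : Set.InjOn Q (Set.Iio (k + 2)))
    (hPS : (range (k + 1)).image P = (partialColSumOnes a n k).image (↑))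
    (hQS : (range (k + 2)).image Q = (partialColSumOnes a n (k + 1)).image (↑))
    {m : ℕ} (hm : m < n) :
    partialRowSum a (k + 1) m = countLE Q (k + 2) m - countLE P (k + 1) m := by
  rw [partialRowSum_succ, sum_partialColSum_eq_card hcol colsum hk hm,
    sum_partialColSum_eq_card hcol colsum (by omega) hm,
    countLE_eq_card_filter hP hPS, countLE_eq_card_filter hQ hQS]

theorem countLE_succ_le_countLE_add_one (hrow : ∀ i < n, IsSignAlternating n (a i ·))
    (rowsum : ∀ i < n, ∑ j ∈ range n, a i j = 1)
    (hcol : ∀ j < n, IsSignAlternating n (a · j))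
    (colsum : ∀ j < n, ∑ i ∈ range n, a i j = 1) {k : ℕ} (hk : k + 1 < n)
    {P Q : ℕ → ℤ} (hP : Set.InjOn P (Set.Iio (k + 1))) (hQ : Set.InjOn Q (Set.Iio (k + 2)))
    (hPS : (range (k + 1)).image P = (partialColSumOnes a n k).image (↑))
    (hQS : (range (k + 2)).image Q = (partialColSumOnes a n (k + 1)).image (↑))
    {x : ℤ} (hx : x < n) :
    countLE Q (k + 2) x ≤ countLE P (k + 1) x + 1 := by
  rcases lt_or_ge x 0 with hneg | hnonneg
  · rw [countLE_eq_card_filter hQ hQS, filter_false_of_mem fun m _ => by omega]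
    simp
  · lift x to ℕ using hnonneg
    have hx : x < n := by exact_mod_cast hx
    have := partialRowSum_succ_eq_countLE_sub hcol colsum hk hP hQ hPS hQS hx
    rcases partialRowSum_eq_zero_or_one hrow rowsum hk hx with h | h <;> omega

theorem sum_partialColSum_mul_partialRowSum_succ (hrow : ∀ i < n, IsSignAlternating n (a i ·))
    (rowsum : ∀ i < n, ∑ j ∈ range n, a i j = 1)
    (hcol : ∀ j < n, IsSignAlternating n (a · j))
    (colsum : ∀ j < n, ∑ i ∈ range n, a i j = 1) {k : ℕ} (hk : k + 1 < n)
    {P Q : ℕ → ℤ} (hP : StrictMonoOn P (Set.Iio (k + 1)))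
    (hQ : StrictMonoOn Q (Set.Iio (k + 2)))
    (hPS : (range (k + 1)).image P = (partialColSumOnes a n k).image (↑))
    (hQS : (range (k + 2)).image Q = (partialColSumOnes a n (k + 1)).image (↑)) :
    ∑ j ∈ range n, partialColSum a k j * partialRowSum a (k + 1) j
      = #{j ∈ range (k + 1) | Q j ≤ P j ∧ P j = Q (j + 1)} := by
  have hterm : ∀ j < k + 1, partialRowSum a (k + 1) (P j).toNat
      = if Q j ≤ P j ∧ P j = Q (j + 1) then 1 else 0 := by
    intro j hj
    obtain ⟨m, hm, hmP⟩ : ∃ m ∈ partialColSumOnes a n k, (m : ℤ) = P j :=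
      mem_image.1 (hPS ▸ mem_image_of_mem P (mem_range.2 hj))
    have hmn : m < n := mem_range.1 (mem_filter.1 hm).1
    have hiff : countLE Q (k + 2) (P j) = countLE P (k + 1) (P j) + 1 ↔ _ :=
      countLE_eq_succ_iff hP hQ hj fun x hx =>
        countLE_succ_le_countLE_add_one hrow rowsum hcol colsum hk hP.injOn hQ.injOn hPS hQS
          (by omega)
    have := partialRowSum_succ_eq_countLE_sub hcol colsum hk hP.injOn hQ.injOn hPS hQS hmn
    rw [← hmP] at hiff ⊢
    rw [Int.toNat_natCast]
    split_ifs with hc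
    · have := hiff.2 hc
      omega
    · rcases partialRowSum_eq_zero_or_one hrow rowsum hk hmn with h | h
      · exact h
      · exact absurd (hiff.1 (by omega)) hc
  calc ∑ j ∈ range n, partialColSum a k j * partialRowSum a (k + 1) j
      = ∑ m ∈ partialColSumOnes a n k, partialRowSum a (k + 1) m := by
        rw [partialColSumOnes, sum_filter]
        refine sum_congr rfl fun j hj => ?_
        rcases partialColSum_eq_zero_or_one hcol colsum (by omega : k < n) (mem_range.1 hj)
          with h | h <;> simp [h]
    _ = ∑ j ∈ range (k + 1), partialRowSum a (k + 1) (P j).toNat := by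
        simpa using
          sum_eq_sum_range_of_image_eq hP.injOn hPS fun x => partialRowSum a (k + 1) x.toNat
    _ = _ := by rw [sum_congr rfl fun j hj => hterm j (mem_range.1 hj), sum_boole]

end ASM

/-- Let `a` be an `n × n` alternating sign matrix (entries in `{−1,0,1}`, each row and
column sums to `1`, and the nonzero entries of each row and column alternate in sign),
and let `b` be the corresponding monotone triangle: `b i j − j` is the `j`-th column
(in increasing order) in which the partial column sum `∑_{i' ≤ i} a i' ·` equals `1`
(the shift by `j` makes rows strictly increasing with gaps, in the half-open-interval
convention).  Then the generalized inversion number of `a`,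
`∑_{i < i', j' ≤ j} a_{ij} a_{i'j'}`, equals that of `b`,
`#{(i,j) : b_{i+1,j} ≤ b_{ij} = b_{i+1,j+1} − 1}`. -/
theorem asm_mt_inversion (n : ℕ) (a : ℕ → ℕ → ℤ) (b : ℕ → ℕ → ℤ)
    (entries : ∀ i j, i < n → j < n → a i j = -1 ∨ a i j = 0 ∨ a i j = 1)
    (rowsum : ∀ i < n, ∑ j ∈ Finset.range n, a i j = 1)
    (colsum : ∀ j < n, ∑ i ∈ Finset.range n, a i j = 1)
    (rowalt : ∀ i < n, ∀ j j', j < j' → j' < n → a i j ≠ 0 → a i j' ≠ 0 →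
      (∀ j'', j < j'' → j'' < j' → a i j'' = 0) → a i j = - a i j')
    (colalt : ∀ j < n, ∀ i i', i < i' → i' < n → a i j ≠ 0 → a i' j ≠ 0 →
      (∀ i'', i < i'' → i'' < i' → a i'' j = 0) → a i j = - a i' j)
    (hmono : ∀ i < n, ∀ j j', j < j' → j' ≤ i → b i j - (j : ℤ) < b i j' - (j' : ℤ))
    (hmem : ∀ i < n, ∀ m < n,
      ((∑ i' ∈ Finset.range (i + 1), a i' m) = 1 ↔ ∃ j ≤ i, b i j - (j : ℤ) = (m : ℤ))) :
    (∑ i ∈ Finset.range n, ∑ i' ∈ Finset.range n,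
      ∑ j ∈ Finset.range n, ∑ j' ∈ Finset.range n,
        if i < i' ∧ j' ≤ j then a i j * a i' j' else 0)
    = (((Finset.range (n - 1) ×ˢ Finset.range n).filter
        (fun p => p.2 ≤ p.1 ∧ b (p.1 + 1) p.2 ≤ b p.1 p.2 ∧
          b p.1 p.2 = b (p.1 + 1) (p.2 + 1) - 1)).card : ℤ) := by
  have hrow : ∀ i < n, IsSignAlternating n (a i ·) :=
    fun i hi => ⟨fun j hj => entries i j hi hj, rowalt i hi⟩
  have hcol : ∀ j < n, IsSignAlternating n (a · j) :=
    fun j hj => ⟨fun i hi => entries i j hi hj, colalt j hj⟩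
  have hrowMono : ∀ i < n, StrictMonoOn (fun j => b i j - (j : ℤ)) (Set.Iio (i + 1)) :=
    fun i hi _ _ j' hj' hjj' => hmono i hi _ j' hjj' (Nat.lt_succ_iff.1 hj')
  have hrowImage : ∀ i < n, (range (i + 1)).image (fun j => b i j - (j : ℤ))
      = (partialColSumOnes a n i).image (↑) := fun i hi =>
    image_range_eq_partialColSumOnes hcol colsum rowsum hi (hrowMono i hi).injOn
      fun m hm => (hmem i hi m hm).1
  rw [inversion_sum_eq_sum_partialColSum_mul, card_filter_product_eq_sum, Nat.cast_sum]
  refine sum_congr rfl fun k hk => ?_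
  have hk : k + 1 < n := by rw [mem_range] at hk; omega
  rw [sum_partialColSum_mul_partialRowSum_succ hrow rowsum hcol colsum hk (hrowMono k (by omega))
    (hrowMono (k + 1) hk) (hrowImage k (by omega)) (hrowImage (k + 1) hk)]
  congr 2
  ext j
  simp only [mem_filter, mem_range]
  push_cast
  omega
end
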